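/- arXiv:2210.00355 — 3 statements merged into one kernel-verified Lean document; each statement's English description precedes it below -/
import Mathlib

section
/- Suppose ε ∈ (0,1/2] and θ ∈ (0,1), and Y and Z are {0,1}-valued random variables whose joint probability function is the matrix Λ^{(ε,θ)}, i.e., P((Y,Z)=(i,j)) = λ^{(ε,θ)}_{ij} for all (i,j) ∈ {0,1}². Then ρ(σ(Y), σ(Z)) = θ, where σ(Y) and σ(Z) are the σ-fields generated by Y and Z. -/
open MeasureTheory ProbabilityTheory Filter Set

noncomputable section

namespace Bradley

variable {Ω : Type*} [MeasurableSpace Ω]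

/-- The strong mixing (α-mixing) coefficient between two sub-σ-fields. -/
def alphaMix (P : Measure Ω) (𝓐 𝓑 : MeasurableSpace Ω) : ℝ :=
  sSup {x : ℝ | ∃ A B : Set Ω, MeasurableSet[𝓐] A ∧ MeasurableSet[𝓑] B ∧
    x = |(P (A ∩ B)).toReal - (P A).toReal * (P B).toReal|}

/-- `A : Fin n → Set Ω` is a finite partition of `Ω` into `𝓐`-measurable pieces. -/
def IsFinitePartitionIn (𝓐 : MeasurableSpace Ω) {n : ℕ} (A : Fin n → Set Ω) : Prop :=
  (∀ i, MeasurableSet[𝓐] (A i)) ∧ Pairwise (Function.onFun Disjoint A) ∧ (⋃ i, A i) = Set.univ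

/-- The absolute regularity (β-mixing) coefficient between two sub-σ-fields. -/
def betaMix (P : Measure Ω) (𝓐 𝓑 : MeasurableSpace Ω) : ℝ :=
  sSup {x : ℝ | ∃ (m n : ℕ) (A : Fin m → Set Ω) (B : Fin n → Set Ω),
    IsFinitePartitionIn 𝓐 A ∧ IsFinitePartitionIn 𝓑 B ∧
    x = (1/2) * ∑ i, ∑ j, |(P (A i ∩ B j)).toReal - (P (A i)).toReal * (P (B j)).toReal|}

/-- Covariance of two real random variables. -/
def cov {Ω : Type*} {_ : MeasurableSpace Ω} (P : Measure Ω) (Y Z : Ω → ℝ) : ℝ :=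
  ∫ ω, (Y ω - ∫ a, Y a ∂P) * (Z ω - ∫ a, Z a ∂P) ∂P

/-- Correlation of two real random variables. -/
def corr {Ω : Type*} {_ : MeasurableSpace Ω} (P : Measure Ω) (Y Z : Ω → ℝ) : ℝ :=
  cov P Y Z / (Real.sqrt (variance Y P) * Real.sqrt (variance Z P))

/-- The maximal correlation (ρ-mixing) coefficient between two sub-σ-fields. -/
def rhoMix (P : Measure Ω) (𝓐 𝓑 : MeasurableSpace Ω) : ℝ :=
  sSup {x : ℝ | ∃ Y Z : Ω → ℝ, Measurable[𝓐] Y ∧ Measurable[𝓑] Z ∧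
    MemLp Y 2 P ∧ MemLp Z 2 P ∧ 0 < variance Y P ∧ 0 < variance Z P ∧
    x = |corr P Y Z|}

/-- Strict stationarity of a two-sided sequence of real random variables. -/
def StrictlyStationary (P : Measure Ω) (X : ℤ → Ω → ℝ) : Prop :=
  ∀ j : ℤ, Measure.map (fun ω (k : ℤ) => X (k + j) ω) P
    = Measure.map (fun ω (k : ℤ) => X k ω) P

/-- Reversibility: the time-reversed sequence has the same distribution. -/
def Reversible (P : Measure Ω) (X : ℤ → Ω → ℝ) : Prop :=
  Measure.map (fun ω (k : ℤ) => X (-k) ω) P = Measure.map (fun ω (k : ℤ) => X k ω) P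

/-- The σ-field generated by `X j`, `j ≤ k`. -/
def pastSigma (X : ℤ → Ω → ℝ) (k : ℤ) : MeasurableSpace Ω :=
  ⨆ j ≤ k, MeasurableSpace.comap (X j) inferInstance

/-- The σ-field generated by `X j`, `j ≥ k`. -/
def futureSigma (X : ℤ → Ω → ℝ) (k : ℤ) : MeasurableSpace Ω :=
  ⨆ (j) (_ : k ≤ j), MeasurableSpace.comap (X j) inferInstance

/-- Conditional independence of the σ-fields `mA` and `mB` given the σ-field `m`:
for all events `A ∈ mA`, `B ∈ mB`, `E[1_{A∩B} | m] = E[1_A | m] · E[1_B | m]` a.e. -/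
def CondIndepGiven (P : Measure Ω) (m mA mB : MeasurableSpace Ω) : Prop :=
  ∀ A B : Set Ω, MeasurableSet[mA] A → MeasurableSet[mB] B →
    MeasureTheory.condExp m P ((A ∩ B).indicator fun _ => (1 : ℝ))
      =ᵐ[P] fun ω => MeasureTheory.condExp m P (A.indicator fun _ => (1 : ℝ)) ω
        * MeasureTheory.condExp m P (B.indicator fun _ => (1 : ℝ)) ω

/-- Markov property: for every `k`, past and future are conditionally
independent given `σ(X k)`. -/
def IsMarkovChain (P : Measure Ω) (X : ℤ → Ω → ℝ) : Prop :=
  ∀ k : ℤ, CondIndepGiven P (MeasurableSpace.comap (X k) inferInstance)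
    (pastSigma X k) (futureSigma X k)

/-- `α_X(n)`. -/
def alphaX (P : Measure Ω) (X : ℤ → Ω → ℝ) (n : ℕ) : ℝ :=
  alphaMix P (pastSigma X 0) (futureSigma X n)

/-- `β_X(n)`. -/
def betaX (P : Measure Ω) (X : ℤ → Ω → ℝ) (n : ℕ) : ℝ :=
  betaMix P (pastSigma X 0) (futureSigma X n)

/-- `ρ_X(n)`. -/
def rhoX (P : Measure Ω) (X : ℤ → Ω → ℝ) (n : ℕ) : ℝ :=
  rhoMix P (pastSigma X 0) (futureSigma X n)

/-- The joint-probability matrix `Λ^{(ε,θ)}`. -/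
def lam (ε θ : ℝ) (i j : Fin 2) : ℝ :=
  if i = 0 then
    (if j = 0 then (1 - ε) ^ 2 + (1 - ε) * ε * θ else (1 - ε) * ε - (1 - ε) * ε * θ)
  else
    (if j = 0 then (1 - ε) * ε - (1 - ε) * ε * θ else ε ^ 2 + (1 - ε) * ε * θ)

/-- The transition-probability matrix `ℙ^{(ε,θ)}`. -/
def pmat (ε θ : ℝ) (i j : Fin 2) : ℝ :=
  if i = 0 then
    (if j = 0 then (1 - ε) + ε * θ else ε - ε * θ)
  else
    (if j = 0 then (1 - ε) - (1 - ε) * θ else ε + (1 - ε) * θ)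

/-- Slope `ζ_{v,y}` of the chord of `g` from `v` to `y`. -/
def chordSlope (g : ℝ → ℝ) (v y : ℝ) : ℝ := (g y - g v) / (y - v)

/-- The chord (affine) function `C_{v,y}` (extended to all of `ℝ`). -/
def chordLine (g : ℝ → ℝ) (v y x : ℝ) : ℝ := g v + chordSlope g v y * (x - v)

/-- `M_{v,y} := sup_{x ∈ [v,y]} (C_{v,y}(x) − g(x))`. -/
def Mvy (g : ℝ → ℝ) (v y : ℝ) : ℝ :=
  sSup ((fun x => chordLine g v y x - g x) '' Set.Icc v y)

/-- `g(x) := x·log₂ r + log₂ f(x)`. -/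
def gOf (r : ℝ) (f : ℝ → ℝ) (x : ℝ) : ℝ := x * Real.logb 2 r + Real.logb 2 (f x)

section Aux
variable {Ω : Type*} [MeasurableSpace Ω] (P : Measure Ω) [IsProbabilityMeasure P]

lemma memLp_of01 {f : Ω → ℝ} (hm : Measurable f) (hf : ∀ ω, f ω = 0 ∨ f ω = 1) :
    MemLp f 2 P :=
  MemLp.of_bound hm.aestronglyMeasurable 1 (ae_of_all _ fun ω => by
    rcases hf ω with h | h <;> simp [h])

lemma integral_of01 {f : Ω → ℝ} (hm : Measurable f) (hf : ∀ ω, f ω = 0 ∨ f ω = 1) :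
    ∫ ω, f ω ∂P = (P {ω | f ω = 1}).toReal := by
  have h1 : f = Set.indicator {ω | f ω = 1} (fun _ => (1:ℝ)) := by
    funext ω; rcases hf ω with h | h <;> simp [Set.indicator_apply, h]
  have hms : MeasurableSet {ω | f ω = 1} := hm (measurableSet_singleton 1)
  conv_lhs => rw [h1]
  exact MeasureTheory.integral_indicator_one (μ := P) hms

lemma variance_of01 {f : Ω → ℝ} (hm : Measurable f) (hf : ∀ ω, f ω = 0 ∨ f ω = 1) :
    variance f P = (P {ω | f ω = 1}).toReal - (P {ω | f ω = 1}).toReal ^ 2 := by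
  have h2 : f ^ 2 = f := by
    funext ω; rcases hf ω with h | h <;> simp [h]
  rw [variance_eq_sub (memLp_of01 P hm hf), h2, integral_of01 P hm hf]

lemma cov_eq {Y Z : Ω → ℝ} (hYi : Integrable Y P) (hZi : Integrable Z P)
    (hYZi : Integrable (fun ω => Y ω * Z ω) P) :
    cov P Y Z = (∫ ω, Y ω * Z ω ∂P) - (∫ ω, Y ω ∂P) * (∫ ω, Z ω ∂P) := by
  set a := ∫ ω, Y ω ∂P with ha
  set b := ∫ ω, Z ω ∂P with hb
  have h1 : (fun ω => (Y ω - a) * (Z ω - b))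
      = fun ω => Y ω * Z ω - b * Y ω - a * Z ω + a * b := funext fun ω => by ring
  have i1 : Integrable (fun ω => Y ω * Z ω - b * Y ω) P := hYZi.sub (hYi.const_mul b)
  have i2 : Integrable (fun ω => Y ω * Z ω - b * Y ω - a * Z ω) P := i1.sub (hZi.const_mul a)
  have h2 : ∫ ω, (Y ω * Z ω - b * Y ω - a * Z ω + a * b) ∂P
      = (∫ ω, Y ω * Z ω ∂P) - b * (∫ ω, Y ω ∂P) - a * (∫ ω, Z ω ∂P) + a * b := by
    rw [integral_add i2 (integrable_const (a * b)), integral_sub i1 (hZi.const_mul a),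
      integral_sub hYZi (hYi.const_mul b), integral_const_mul, integral_const_mul, integral_const]
    simp
  rw [cov, ← ha, ← hb, h1, h2]
  ring

lemma integral_affine {Y : Ω → ℝ} (hYi : Integrable Y P) (a b : ℝ) :
    ∫ ω, (a + b * Y ω) ∂P = a + b * ∫ ω, Y ω ∂P := by
  rw [integral_add (integrable_const _) (hYi.const_mul b), integral_const,
    integral_const_mul]
  simp

lemma cov_affine {Y Z : Ω → ℝ} (hYi : Integrable Y P) (hZi : Integrable Z P)
    (a b c d : ℝ) :
    cov P (fun ω => a + b * Y ω) (fun ω => c + d * Z ω) = b * d * cov P Y Z := by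
  rw [cov, cov, integral_affine P hYi, integral_affine P hZi]
  have h1 : (fun ω => (a + b * Y ω - (a + b * ∫ ω, Y ω ∂P)) * (c + d * Z ω - (c + d * ∫ ω, Z ω ∂P)))
      = fun ω => (b * d) * ((Y ω - ∫ a, Y a ∂P) * (Z ω - ∫ a, Z a ∂P)) := funext fun ω => by ring
  rw [h1, integral_const_mul]

lemma variance_affine {Y : Ω → ℝ} (hY : MemLp Y 2 P) (a b : ℝ) :
    variance (fun ω => a + b * Y ω) P = b ^ 2 * variance Y P := by
  have hV : MemLp (fun ω => a + b * Y ω) 2 P := (memLp_const a).add (hY.const_mul b)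
  rw [variance_eq_integral hV.aemeasurable, variance_eq_integral hY.aemeasurable]
  simp only [integral_affine P (hY.integrable one_le_two)]
  have h1 : ((fun ω => a + b * Y ω) - fun _ => a + b * ∫ ω, Y ω ∂P) ^ (2 : ℕ)
      = (b ^ 2) • ((Y - fun _ => ∫ ω, Y ω ∂P) ^ (2 : ℕ)) := by
    funext ω
    simp only [Pi.pow_apply, Pi.sub_apply, Pi.smul_apply, smul_eq_mul]
    ring
  rw [← integral_const_mul (b ^ 2)]
  exact integral_congr_ae (ae_of_all _ fun ω => by ring)

lemma variance_constant (c : ℝ) : variance (fun _ : Ω => c) P = 0 := by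
  have := variance_const_mul 0 (fun _ : Ω => 1) P
  have h : (fun _ : Ω => c) = fun ω => c * (fun _ : Ω => (1:ℝ)) ω := by funext; simp
  rw [h, variance_const_mul]
  have : variance (fun _ : Ω => (1:ℝ)) P = 0 := by
    rw [variance_eq_sub (memLp_const 1)]
    simp
  rw [this]; ring

lemma abs_corr_affine {Y Z : Ω → ℝ} (hY : MemLp Y 2 P) (hZ : MemLp Z 2 P)
    (a b c d : ℝ) (hb : b ≠ 0) (hd : d ≠ 0) :
    |corr P (fun ω => a + b * Y ω) (fun ω => c + d * Z ω)| = |corr P Y Z| := by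
  rw [corr, corr, cov_affine P (hY.integrable one_le_two) (hZ.integrable one_le_two),
    variance_affine P hY, variance_affine P hZ,
    Real.sqrt_mul (sq_nonneg b), Real.sqrt_mul (sq_nonneg d), Real.sqrt_sq_eq_abs,
    Real.sqrt_sq_eq_abs]
  have hbd : |b| * |d| ≠ 0 := mul_ne_zero (abs_ne_zero.mpr hb) (abs_ne_zero.mpr hd)
  rw [abs_div, abs_div, abs_mul (b * d), abs_mul b d,
    abs_of_nonneg (show (0:ℝ) ≤ |b| * Real.sqrt (variance Y P) * (|d| * Real.sqrt (variance Z P)) by positivity),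
    abs_of_nonneg (show (0:ℝ) ≤ Real.sqrt (variance Y P) * Real.sqrt (variance Z P) by positivity),
    show |b| * Real.sqrt (variance Y P) * (|d| * Real.sqrt (variance Z P))
      = |b| * |d| * (Real.sqrt (variance Y P) * Real.sqrt (variance Z P)) from by ring,
    mul_div_mul_left _ _ hbd]

end Aux
theorem statement_4 {Ω : Type*} [MeasurableSpace Ω] (P : Measure Ω)
    [IsProbabilityMeasure P] (ε θ : ℝ) (hε : ε ∈ Set.Ioc (0 : ℝ) (1/2))
    (hθ : θ ∈ Set.Ioo (0 : ℝ) 1)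
    (Y Z : Ω → ℝ) (hYm : Measurable Y) (hZm : Measurable Z)
    (hY : ∀ ω, Y ω = 0 ∨ Y ω = 1) (hZ : ∀ ω, Z ω = 0 ∨ Z ω = 1)
    (hjoint : ∀ i j : Fin 2,
      P {ω | Y ω = ((i : ℕ) : ℝ) ∧ Z ω = ((j : ℕ) : ℝ)} = ENNReal.ofReal (lam ε θ i j)) :
    rhoMix P (MeasurableSpace.comap Y inferInstance)
      (MeasurableSpace.comap Z inferInstance) = θ := by
  obtain ⟨hε0, hε2⟩ := hε
  obtain ⟨hθ0, hθ1⟩ := hθ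
  have hε1 : ε < 1 := lt_of_le_of_lt hε2 (by norm_num)
  have h00 : P {ω | Y ω = 0 ∧ Z ω = 0} = ENNReal.ofReal ((1 - ε)^2 + (1 - ε) * ε * θ) := by
    simpa [lam] using hjoint 0 0
  have h01 : P {ω | Y ω = 0 ∧ Z ω = 1} = ENNReal.ofReal ((1 - ε) * ε - (1 - ε) * ε * θ) := by
    simpa [lam] using hjoint 0 1
  have h10 : P {ω | Y ω = 1 ∧ Z ω = 0} = ENNReal.ofReal ((1 - ε) * ε - (1 - ε) * ε * θ) := by
    simpa [lam] using hjoint 1 0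
  have h11 : P {ω | Y ω = 1 ∧ Z ω = 1} = ENNReal.ofReal (ε^2 + (1 - ε) * ε * θ) := by
    simpa [lam] using hjoint 1 1
  have hA : (0:ℝ) ≤ (1 - ε) * ε - (1 - ε) * ε * θ := by
    nlinarith [mul_pos (mul_pos (sub_pos.mpr hε1) hε0) (sub_pos.mpr hθ1)]
  have hB : (0:ℝ) < ε^2 + (1 - ε) * ε * θ := by nlinarith
  have hC : (0:ℝ) < (1 - ε)^2 + (1 - ε) * ε * θ := by nlinarith
  have hmeas : ∀ (r s : ℝ), MeasurableSet {ω | Y ω = r ∧ Z ω = s} := fun r s =>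
    (hYm (measurableSet_singleton r)).inter (hZm (measurableSet_singleton s))
  have hUY : {ω | Y ω = 1} = {ω | Y ω = 1 ∧ Z ω = 0} ∪ {ω | Y ω = 1 ∧ Z ω = 1} := by
    ext ω; rcases hZ ω with h | h <;> simp [h]
  have hdisjY : Disjoint {ω | Y ω = 1 ∧ Z ω = 0} {ω | Y ω = 1 ∧ Z ω = 1} := by
    rw [Set.disjoint_left]; rintro ω ⟨-, h0⟩ ⟨-, h1⟩; rw [h0] at h1; norm_num at h1
  have hPY1 : P {ω | Y ω = 1} = ENNReal.ofReal ε := by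
    rw [hUY, measure_union hdisjY (hmeas 1 1), h10, h11, ← ENNReal.ofReal_add hA hB.le]
    congr 1; ring
  have hUZ : {ω | Z ω = 1} = {ω | Y ω = 0 ∧ Z ω = 1} ∪ {ω | Y ω = 1 ∧ Z ω = 1} := by
    ext ω; rcases hY ω with h | h <;> simp [h]
  have hdisjZ : Disjoint {ω | Y ω = 0 ∧ Z ω = 1} {ω | Y ω = 1 ∧ Z ω = 1} := by
    rw [Set.disjoint_left]; rintro ω ⟨h0, -⟩ ⟨h1, -⟩; rw [h0] at h1; norm_num at h1
  have hPZ1 : P {ω | Z ω = 1} = ENNReal.ofReal ε := by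
    rw [hUZ, measure_union hdisjZ (hmeas 1 1), h01, h11, ← ENNReal.ofReal_add hA hB.le]
    congr 1; ring
  have hprod : {ω | Y ω * Z ω = 1} = {ω | Y ω = 1 ∧ Z ω = 1} := by
    ext ω; rcases hY ω with h | h <;> rcases hZ ω with h' | h' <;> simp [h, h']
  have hprod01 : ∀ ω, Y ω * Z ω = 0 ∨ Y ω * Z ω = 1 := fun ω => by
    rcases hY ω with h | h <;> rcases hZ ω with h' | h' <;> simp [h, h']
  have hYL2 := memLp_of01 P hYm hY
  have hZL2 := memLp_of01 P hZm hZ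
  have hEY : ∫ ω, Y ω ∂P = ε := by
    rw [integral_of01 P hYm hY, hPY1, ENNReal.toReal_ofReal hε0.le]
  have hEZ : ∫ ω, Z ω ∂P = ε := by
    rw [integral_of01 P hZm hZ, hPZ1, ENNReal.toReal_ofReal hε0.le]
  have hEYZ : ∫ ω, Y ω * Z ω ∂P = ε^2 + (1 - ε) * ε * θ := by
    rw [integral_of01 P (f := fun ω => Y ω * Z ω) (hYm.mul hZm) hprod01, hprod, h11, ENNReal.toReal_ofReal hB.le]
  have hYZi : Integrable (fun ω => Y ω * Z ω) P :=
    (memLp_of01 P (hYm.mul hZm) hprod01).integrable one_le_two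
  have hcov : cov P Y Z = (1 - ε) * ε * θ := by
    rw [cov_eq P (hYL2.integrable one_le_two) (hZL2.integrable one_le_two) hYZi,
      hEYZ, hEY, hEZ]
    ring
  have hVarY : variance Y P = ε * (1 - ε) := by
    rw [variance_of01 P hYm hY, hPY1, ENNReal.toReal_ofReal hε0.le]; ring
  have hVarZ : variance Z P = ε * (1 - ε) := by
    rw [variance_of01 P hZm hZ, hPZ1, ENNReal.toReal_ofReal hε0.le]; ring
  have hVarpos : 0 < ε * (1 - ε) := by nlinarith
  have hVarYpos : 0 < variance Y P := by rw [hVarY]; exact hVarpos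
  have hVarZpos : 0 < variance Z P := by rw [hVarZ]; exact hVarpos
  have hcorr : corr P Y Z = θ := by
    rw [corr, hcov, hVarY, hVarZ, Real.mul_self_sqrt hVarpos.le,
      div_eq_iff (ne_of_gt hVarpos)]
    ring
  have hx0 : ∃ ω, Y ω = 0 := by
    by_contra h
    push_neg at h
    have he : {ω | Y ω = 0 ∧ Z ω = 0} = ∅ := by ext ω; simp [h ω]
    rw [he, measure_empty] at h00
    exact absurd h00.symm (ne_of_gt (ENNReal.ofReal_pos.mpr hC))
  have hx1 : ∃ ω, Y ω = 1 := by
    by_contra h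
    push_neg at h
    have he : {ω | Y ω = 1 ∧ Z ω = 1} = ∅ := by ext ω; simp [h ω]
    rw [he, measure_empty] at h11
    exact absurd h11.symm (ne_of_gt (ENNReal.ofReal_pos.mpr hB))
  have hz0 : ∃ ω, Z ω = 0 := by
    by_contra h
    push_neg at h
    have he : {ω | Y ω = 0 ∧ Z ω = 0} = ∅ := by ext ω; simp [h ω]
    rw [he, measure_empty] at h00
    exact absurd h00.symm (ne_of_gt (ENNReal.ofReal_pos.mpr hC))
  have hz1 : ∃ ω, Z ω = 1 := by
    by_contra h
    push_neg at h
    have he : {ω | Y ω = 1 ∧ Z ω = 1} = ∅ := by ext ω; simp [h ω]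
    rw [he, measure_empty] at h11
    exact absurd h11.symm (ne_of_gt (ENNReal.ofReal_pos.mpr hB))
  have factor : ∀ (T X : Ω → ℝ),
      Measurable[MeasurableSpace.comap X inferInstance] T →
      ∀ ω ω', X ω = X ω' → T ω = T ω' := by
    intro T X hTm ω ω' h
    obtain ⟨C, -, hC⟩ := hTm (measurableSet_singleton (T ω))
    have hω : ω ∈ X ⁻¹' C := by rw [hC]; exact rfl
    have hω' : ω' ∈ X ⁻¹' C := by rw [Set.mem_preimage, ← h]; exact hω
    have hmem : ω' ∈ T ⁻¹' {T ω} := hC ▸ hω'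
    exact (Set.mem_singleton_iff.mp hmem).symm
  have hset : {x : ℝ | ∃ V W : Ω → ℝ,
      Measurable[MeasurableSpace.comap Y inferInstance] V ∧
      Measurable[MeasurableSpace.comap Z inferInstance] W ∧
      MemLp V 2 P ∧ MemLp W 2 P ∧ 0 < variance V P ∧ 0 < variance W P ∧
      x = |corr P V W|} = {θ} := by
    ext x
    simp only [Set.mem_setOf_eq, Set.mem_singleton_iff]
    constructor
    · rintro ⟨V, W, hVm, hWm, hVL2, hWL2, hVv, hWv, rfl⟩
      obtain ⟨ω₀, hω₀⟩ := hx0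
      obtain ⟨ω₁, hω₁⟩ := hx1
      obtain ⟨ν₀, hν₀⟩ := hz0
      obtain ⟨ν₁, hν₁⟩ := hz1
      have hVaff : V = fun ω => V ω₀ + (V ω₁ - V ω₀) * Y ω := by
        funext ω
        rcases hY ω with h | h
        · rw [factor V Y hVm ω ω₀ (by rw [h, hω₀]), h]; ring
        · rw [factor V Y hVm ω ω₁ (by rw [h, hω₁]), h]; ring
      have hWaff : W = fun ω => W ν₀ + (W ν₁ - W ν₀) * Z ω := by
        funext ω
        rcases hZ ω with h | h
        · rw [factor W Z hWm ω ν₀ (by rw [h, hν₀]), h]; ring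
        · rw [factor W Z hWm ω ν₁ (by rw [h, hν₁]), h]; ring
      have hb : V ω₁ - V ω₀ ≠ 0 := by
        intro h0
        have hc : V = fun _ => V ω₀ := by rw [hVaff]; funext ω; rw [h0]; ring
        rw [hc, variance_constant] at hVv
        exact lt_irrefl 0 hVv
      have hd : W ν₁ - W ν₀ ≠ 0 := by
        intro h0
        have hc : W = fun _ => W ν₀ := by rw [hWaff]; funext ω; rw [h0]; ring
        rw [hc, variance_constant] at hWv
        exact lt_irrefl 0 hWv
      rw [hVaff, hWaff, abs_corr_affine P hYL2 hZL2 _ _ _ _ hb hd, hcorr, abs_of_pos hθ0]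
    · rintro rfl
      exact ⟨Y, Z, fun s hs => ⟨s, hs, rfl⟩, fun s hs => ⟨s, hs, rfl⟩,
        hYL2, hZL2, hVarYpos, hVarZpos, by rw [hcorr, abs_of_pos hθ0]⟩
  unfold rhoMix
  rw [hset, csSup_singleton]

end Bradley
end
end

section
/- Suppose I is a nonempty countable index set, and (𝓐_i)_{i∈I} and (𝓑_i)_{i∈I} are sub-σ-fields of 𝓕 such that the σ-fields 𝓐_i ∨ 𝓑_i, i ∈ I, are independent. Then β(⋁_{i∈I} 𝓐_i, ⋁_{i∈I} 𝓑_i) ≤ ∑_{i∈I} β(𝓐_i, 𝓑_i). -/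
open MeasureTheory ProbabilityTheory Filter Set

noncomputable section

namespace Bradley

variable {Ω : Type*} [MeasurableSpace Ω]

section Cells
open scoped symmDiff ENNReal
variable {Ω : Type*} {ι κ : Type*}


open Classical in
/-- Boolean pattern of membership of `ω` in the family `G`. -/
noncomputable def patt (G : ι → Set Ω) (ω : Ω) : ι → Bool := fun t => decide (ω ∈ G t)

/-- The cell of the family `G` with pattern `b`. -/
def cellOf (G : ι → Set Ω) (b : ι → Bool) : Set Ω := {ω | patt G ω = b}

lemma patt_eq_true_iff {G : ι → Set Ω} {ω : Ω} {t : ι} : patt G ω t = true ↔ ω ∈ G t := by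
  simp [patt]

lemma mem_cellOf {G : ι → Set Ω} {b : ι → Bool} {ω : Ω} :
    ω ∈ cellOf G b ↔ ∀ t, (ω ∈ G t ↔ b t = true) := by
  constructor
  · intro h t
    have h' : patt G ω t = b t := congrFun h t
    rw [← h', patt_eq_true_iff]
  · intro h
    funext t
    cases hb : b t
    · cases hp : patt G ω t
      · rfl
      · exact absurd ((h t).1 (patt_eq_true_iff.1 hp)) (by simp [hb])
    · exact patt_eq_true_iff.2 ((h t).2 hb)

lemma mem_cellOf_patt (G : ι → Set Ω) (ω : Ω) : ω ∈ cellOf G (patt G ω) := rfl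

lemma cellOf_pairwise_disjoint (G : ι → Set Ω) :
    Pairwise (Function.onFun Disjoint (cellOf G)) := by
  intro b b' hbb'
  rw [Function.onFun, Set.disjoint_left]
  intro ω hb hb'
  exact hbb' (hb.symm.trans hb')

lemma iUnion_cellOf (G : ι → Set Ω) : (⋃ b, cellOf G b) = univ := by
  ext ω; simp only [mem_iUnion, mem_univ, iff_true]
  exact ⟨patt G ω, mem_cellOf_patt G ω⟩

lemma cellOf_measurable {m : MeasurableSpace Ω} [Countable ι] {G : ι → Set Ω}
    (hG : ∀ t, MeasurableSet[m] (G t)) (b : ι → Bool) : MeasurableSet[m] (cellOf G b) := by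
  have : cellOf G b = ⋂ t, (if b t = true then G t else (G t)ᶜ) := by
    ext ω
    simp only [mem_cellOf, mem_iInter]
    refine forall_congr' fun t => ?_
    cases hb : b t <;> simp [hb]
  rw [this]
  exact MeasurableSet.iInter fun t => by
    by_cases hb : b t = true <;> simp only [hb, if_true, if_false] <;>
      [exact hG t; exact (hG t).compl]

/-- `U` is saturated for the pair of families `(G, H)`: membership in `U` only depends on
the membership patterns w.r.t. `G` and `H`. -/
def Sat (G : ι → Set Ω) (H : κ → Set Ω) (U : Set Ω) : Prop :=
  ∀ ω ω', (∀ t, ω ∈ G t ↔ ω' ∈ G t) → (∀ t, ω ∈ H t ↔ ω' ∈ H t) → ω ∈ U → ω' ∈ U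

namespace Sat

variable {G : ι → Set Ω} {H : κ → Set Ω} {U V : Set Ω}

lemma empty : Sat G H (∅ : Set Ω) := fun _ _ _ _ h => h.elim

lemma univ : Sat G H (univ : Set Ω) := fun _ _ _ _ _ => trivial

lemma compl (hU : Sat G H U) : Sat G H Uᶜ :=
  fun ω ω' hG hH hω hmem => hω (hU ω' ω (fun t => (hG t).symm) (fun t => (hH t).symm) hmem)

lemma union (hU : Sat G H U) (hV : Sat G H V) : Sat G H (U ∪ V) := by
  rintro ω ω' hG hH (h | h)
  · exact Or.inl (hU ω ω' hG hH h)
  · exact Or.inr (hV ω ω' hG hH h)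

lemma inter (hU : Sat G H U) (hV : Sat G H V) : Sat G H (U ∩ V) :=
  fun ω ω' hG hH h => ⟨hU ω ω' hG hH h.1, hV ω ω' hG hH h.2⟩

lemma iUnion {τ : Sort*} {f : τ → Set Ω} (h : ∀ j, Sat G H (f j)) : Sat G H (⋃ j, f j) := by
  intro ω ω' hG hH hω
  rw [mem_iUnion] at hω ⊢
  obtain ⟨j, hj⟩ := hω
  exact ⟨j, h j ω ω' hG hH hj⟩

lemma diff (hU : Sat G H U) (hV : Sat G H V) : Sat G H (U \ V) := hU.inter hV.compl

lemma basic_left (t₀ : ι) : Sat G H (G t₀) := fun ω ω' hG _ h => (hG t₀).1 h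

lemma basic_right (t₀ : κ) : Sat G H (H t₀) := fun _ _ _ hH h => (hH t₀).1 h

lemma mono {ι' κ' : Type*} {G' : ι' → Set Ω} {H' : κ' → Set Ω}
    (hG : ∀ t, ∃ t', G t = G' t') (hH : ∀ t, ∃ t', H t = H' t') (hU : Sat G H U) :
    Sat G' H' U := by
  intro ω ω' hG' hH' hω
  refine hU ω ω' (fun t => ?_) (fun t => ?_) hω
  · obtain ⟨t', ht'⟩ := hG t; rw [ht']; exact hG' t'
  · obtain ⟨t', ht'⟩ := hH t; rw [ht']; exact hH' t'

lemma subset_of_inter_nonempty {b : ι → Bool} {c : κ → Bool} (hU : Sat G H U)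
    (hne : (U ∩ (cellOf G b ∩ cellOf H c)).Nonempty) : cellOf G b ∩ cellOf H c ⊆ U := by
  obtain ⟨ω₀, hω₀U, hω₀b, hω₀c⟩ := hne
  intro ω ⟨hb, hc⟩
  refine hU ω₀ ω (fun t => ?_) (fun t => ?_) hω₀U
  · rw [(mem_cellOf.1 hω₀b) t, (mem_cellOf.1 hb) t]
  · rw [(mem_cellOf.1 hω₀c) t, (mem_cellOf.1 hc) t]

lemma measurableSet [Fintype ι] [Fintype κ] {m m' : MeasurableSpace Ω}
    (hG : ∀ t, MeasurableSet[m] (G t)) (hH : ∀ t, MeasurableSet[m'] (H t))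
    (hU : Sat G H U) : MeasurableSet[m ⊔ m'] U := by
  classical
  have hUeq : U = ⋃ p ∈ Finset.univ.filter
      (fun p : (ι → Bool) × (κ → Bool) => (U ∩ (cellOf G p.1 ∩ cellOf H p.2)).Nonempty),
      cellOf G p.1 ∩ cellOf H p.2 := by
    ext ω
    constructor
    · intro hω
      have hp : ((patt G ω, patt H ω) : (ι → Bool) × (κ → Bool)) ∈ Finset.univ.filter
          (fun p : (ι → Bool) × (κ → Bool) =>
            (U ∩ (cellOf G p.1 ∩ cellOf H p.2)).Nonempty) :=
        Finset.mem_filter.2 ⟨Finset.mem_univ _,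
          ⟨ω, hω, mem_cellOf_patt G ω, mem_cellOf_patt H ω⟩⟩
      exact mem_biUnion hp ⟨mem_cellOf_patt G ω, mem_cellOf_patt H ω⟩
    · intro hω
      rw [mem_iUnion₂] at hω
      obtain ⟨p, hp, hωp⟩ := hω
      exact hU.subset_of_inter_nonempty (Finset.mem_filter.1 hp).2 hωp
  rw [hUeq]
  refine Finset.measurableSet_biUnion _ fun p _ => MeasurableSet.inter ?_ ?_
  · exact (le_sup_left : m ≤ m ⊔ m') _ (cellOf_measurable hG p.1)
  · exact (le_sup_right : m' ≤ m ⊔ m') _ (cellOf_measurable hH p.2)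

end Sat


end Cells

section MeasureAux
open scoped symmDiff ENNReal


variable {Ω : Type*} [MeasurableSpace Ω]

/-- The defect of a pair of sets. -/
def dft (P : Measure Ω) (A B : Set Ω) : ℝ :=
  (P (A ∩ B)).toReal - (P A).toReal * (P B).toReal

variable {P : Measure Ω} [IsProbabilityMeasure P]

lemma toReal_prob_le_one {A : Set Ω} : (P A).toReal ≤ 1 := by
  have h := prob_le_one (μ := P) (s := A)
  calc (P A).toReal ≤ (1 : ℝ≥0∞).toReal := ENNReal.toReal_mono (by simp) h
    _ = 1 := by simp

/-- Partition sum of measures. -/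
lemma toReal_sum_inter {ι : Type*} [Fintype ι] {E : ι → Set Ω}
    (hE : ∀ i, MeasurableSet (E i)) (hd : Pairwise (Function.onFun Disjoint E))
    (hu : (⋃ i, E i) = univ) {X : Set Ω} (hX : MeasurableSet X) :
    ∑ i, (P (X ∩ E i)).toReal = (P X).toReal := by
  have hXeq : X = ⋃ i, X ∩ E i := by rw [← inter_iUnion, hu, inter_univ]
  have hdisj : Pairwise (Function.onFun Disjoint fun i => X ∩ E i) := fun i j hij =>
    (hd hij).mono inter_subset_right inter_subset_right
  have h : P X = ∑' i, P (X ∩ E i) := by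
    conv_lhs => rw [hXeq]
    exact measure_iUnion hdisj fun i => hX.inter (hE i)
  rw [h, tsum_fintype, ENNReal.toReal_sum fun i _ => measure_ne_top P _]

lemma abs_toReal_sub {A U : Set Ω} (hA : MeasurableSet A) (hU : MeasurableSet U) :
    |(P A).toReal - (P U).toReal| ≤ (P (A ∆ U)).toReal :=
  by
    have key : ∀ X Y : Set Ω, (P X).toReal - (P Y).toReal ≤ (P (X ∆ Y)).toReal := by
      intro X Y
      have h : P X ≤ P (X ∆ Y) + P Y := le_trans (measure_mono (fun ω hω => by
        by_cases h : ω ∈ Y <;> simp_all [Set.mem_symmDiff])) (measure_union_le _ _)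
      have := ENNReal.toReal_mono (ENNReal.add_ne_top.2 ⟨measure_ne_top _ _, measure_ne_top _ _⟩) h
      rw [ENNReal.toReal_add (measure_ne_top _ _) (measure_ne_top _ _)] at this
      linarith
    exact abs_sub_le_iff.2 ⟨key A U, by rw [symmDiff_comm]; exact key U A⟩

lemma inter_symmDiff_subset {A B U V : Set Ω} : (A ∩ B) ∆ (U ∩ V) ⊆ (A ∆ U) ∪ (B ∆ V) := by
  intro ω hω
  rw [Set.mem_symmDiff] at hω
  simp only [Set.mem_union, Set.mem_symmDiff, Set.mem_inter_iff] at hω ⊢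
  tauto

lemma toReal_symmDiff_inter_le {A B U V : Set Ω} :
    (P ((A ∩ B) ∆ (U ∩ V))).toReal ≤ (P (A ∆ U)).toReal + (P (B ∆ V)).toReal := by
  have h1 : P ((A ∩ B) ∆ (U ∩ V)) ≤ P (A ∆ U) + P (B ∆ V) :=
    le_trans (measure_mono inter_symmDiff_subset) (measure_union_le _ _)
  calc (P ((A ∩ B) ∆ (U ∩ V))).toReal
      ≤ (P (A ∆ U) + P (B ∆ V)).toReal := ENNReal.toReal_mono
        (ENNReal.add_ne_top.2 ⟨measure_ne_top _ _, measure_ne_top _ _⟩) h1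
    _ = (P (A ∆ U)).toReal + (P (B ∆ V)).toReal :=
        ENNReal.toReal_add (measure_ne_top _ _) (measure_ne_top _ _)

lemma abs_dft_sub {A B U V : Set Ω} (hA : MeasurableSet A) (hB : MeasurableSet B)
    (hU : MeasurableSet U) (hV : MeasurableSet V) :
    |dft P A B - dft P U V| ≤ 2 * ((P (A ∆ U)).toReal + (P (B ∆ V)).toReal) := by
  set x := (P (A ∆ U)).toReal with hx
  set y := (P (B ∆ V)).toReal with hy
  have hxy : |(P (A ∩ B)).toReal - (P (U ∩ V)).toReal| ≤ x + y :=
    le_trans (abs_toReal_sub (hA.inter hB) (hU.inter hV)) toReal_symmDiff_inter_le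
  have hAU : |(P A).toReal - (P U).toReal| ≤ x := abs_toReal_sub hA hU
  have hBV : |(P B).toReal - (P V).toReal| ≤ y := abs_toReal_sub hB hV
  have hprod : |(P A).toReal * (P B).toReal - (P U).toReal * (P V).toReal| ≤ x + y := by
    have heq : (P A).toReal * (P B).toReal - (P U).toReal * (P V).toReal
        = ((P A).toReal - (P U).toReal) * (P B).toReal
          + (P U).toReal * ((P B).toReal - (P V).toReal) := by ring
    rw [heq]
    calc |((P A).toReal - (P U).toReal) * (P B).toReal
          + (P U).toReal * ((P B).toReal - (P V).toReal)|
        ≤ |((P A).toReal - (P U).toReal) * (P B).toReal|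
          + |(P U).toReal * ((P B).toReal - (P V).toReal)| := abs_add_le _ _
      _ = |(P A).toReal - (P U).toReal| * |(P B).toReal|
          + |(P U).toReal| * |(P B).toReal - (P V).toReal| := by rw [abs_mul, abs_mul]
      _ ≤ x * 1 + 1 * y := by
          refine add_le_add (mul_le_mul hAU ?_ (abs_nonneg _) ?_)
            (mul_le_mul ?_ hBV (abs_nonneg _) zero_le_one)
          · rw [abs_of_nonneg ENNReal.toReal_nonneg]; exact toReal_prob_le_one
          · rw [hx]; exact ENNReal.toReal_nonneg
          · rw [abs_of_nonneg ENNReal.toReal_nonneg]; exact toReal_prob_le_one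
      _ = x + y := by ring
  calc |dft P A B - dft P U V|
      = |((P (A ∩ B)).toReal - (P (U ∩ V)).toReal)
        - ((P A).toReal * (P B).toReal - (P U).toReal * (P V).toReal)| := by
        unfold dft; ring_nf
    _ ≤ |(P (A ∩ B)).toReal - (P (U ∩ V)).toReal|
        + |(P A).toReal * (P B).toReal - (P U).toReal * (P V).toReal| := abs_sub _ _
    _ ≤ (x + y) + (x + y) := add_le_add hxy hprod
    _ = 2 * (x + y) := by ring

/-- The half partition sum is at most 1. -/
lemma half_partSum_le_one {m n : ℕ} {A : Fin m → Set Ω} {B : Fin n → Set Ω}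
    (hAmeas : ∀ i, MeasurableSet (A i)) (hAd : Pairwise (Function.onFun Disjoint A))
    (hAu : (⋃ i, A i) = univ)
    (hBmeas : ∀ j, MeasurableSet (B j)) (hBd : Pairwise (Function.onFun Disjoint B))
    (hBu : (⋃ j, B j) = univ) :
    (1/2 : ℝ) * ∑ i, ∑ j, |dft P (A i) (B j)| ≤ 1 := by
  have h1 : ∑ i, ∑ j, (P (A i ∩ B j)).toReal = 1 := by
    have hinner : ∀ i, ∑ j, (P (A i ∩ B j)).toReal = (P (A i)).toReal := fun i =>
      toReal_sum_inter (P := P) hBmeas hBd hBu (hAmeas i)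
    rw [Finset.sum_congr rfl fun i _ => hinner i]
    have := toReal_sum_inter (P := P) hAmeas hAd hAu (MeasurableSet.univ (α := Ω))
    simpa [Set.univ_inter] using this
  have h2 : ∑ i, ∑ j, (P (A i)).toReal * (P (B j)).toReal = 1 := by
    have hB1 : ∑ j, (P (B j)).toReal = 1 := by
      have := toReal_sum_inter (P := P) hBmeas hBd hBu (MeasurableSet.univ (α := Ω))
      simpa [Set.univ_inter] using this
    have hA1 : ∑ i, (P (A i)).toReal = 1 := by
      have := toReal_sum_inter (P := P) hAmeas hAd hAu (MeasurableSet.univ (α := Ω))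
      simpa [Set.univ_inter] using this
    calc ∑ i, ∑ j, (P (A i)).toReal * (P (B j)).toReal
        = ∑ i, (P (A i)).toReal * ∑ j, (P (B j)).toReal := by
          refine Finset.sum_congr rfl fun i _ => ?_
          rw [← Finset.mul_sum]
      _ = 1 := by rw [Finset.sum_congr rfl fun i (_ : i ∈ Finset.univ) => by rw [hB1, mul_one],
            hA1]
  have habs : ∑ i, ∑ j, |dft P (A i) (B j)|
      ≤ ∑ i, ∑ j, ((P (A i ∩ B j)).toReal + (P (A i)).toReal * (P (B j)).toReal) := by
    refine Finset.sum_le_sum fun i _ => Finset.sum_le_sum fun j _ => ?_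
    refine le_trans (abs_sub _ _) ?_
    rw [abs_of_nonneg ENNReal.toReal_nonneg,
      abs_of_nonneg (mul_nonneg ENNReal.toReal_nonneg ENNReal.toReal_nonneg)]
  have : ∑ i, ∑ j, |dft P (A i) (B j)| ≤ 2 := by
    refine le_trans habs (le_of_eq ?_)
    have hsplit : ∑ i, ∑ j, ((P (A i ∩ B j)).toReal + (P (A i)).toReal * (P (B j)).toReal)
        = (∑ i, ∑ j, (P (A i ∩ B j)).toReal)
          + ∑ i, ∑ j, (P (A i)).toReal * (P (B j)).toReal := by
      rw [← Finset.sum_add_distrib]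
      exact Finset.sum_congr rfl fun i _ => by rw [← Finset.sum_add_distrib]
    rw [hsplit, h1, h2]; norm_num
  linarith


end MeasureAux

section BetaMixAux
open scoped symmDiff ENNReal

/-- The set of values whose supremum is `betaMix`. -/
def betaSet {Ω : Type*} [MeasurableSpace Ω] (P : Measure Ω) (𝓐 𝓑 : MeasurableSpace Ω) :
    Set ℝ :=
  {x : ℝ | ∃ (m n : ℕ) (A : Fin m → Set Ω) (B : Fin n → Set Ω),
    IsFinitePartitionIn 𝓐 A ∧ IsFinitePartitionIn 𝓑 B ∧
    x = (1/2) * ∑ i, ∑ j, |(P (A i ∩ B j)).toReal - (P (A i)).toReal * (P (B j)).toReal|}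

variable {Ω : Type*} {mA mB : MeasurableSpace Ω} [𝓕 : MeasurableSpace Ω] {P : Measure Ω}
  [IsProbabilityMeasure P]

lemma betaMix_eq_sSup : betaMix P mA mB = sSup (betaSet P mA mB) := rfl

lemma zero_mem_betaSet : (0 : ℝ) ∈ betaSet P mA mB := by
  refine ⟨1, 1, fun _ => univ, fun _ => univ, ?_, ?_, ?_⟩
  · exact ⟨fun _ => @MeasurableSet.univ Ω mA, Subsingleton.pairwise, by simp [Set.iUnion_const]⟩
  · exact ⟨fun _ => @MeasurableSet.univ Ω mB, Subsingleton.pairwise, by simp [Set.iUnion_const]⟩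
  · simp [Set.univ_inter]

lemma betaSet_le_one (hmA : mA ≤ 𝓕) (hmB : mB ≤ 𝓕) :
    ∀ x ∈ betaSet P mA mB, x ≤ 1 := by
  rintro x ⟨m, n, A, B, hA, hB, rfl⟩
  exact half_partSum_le_one (fun i => hmA _ (hA.1 i)) hA.2.1 hA.2.2
    (fun j => hmB _ (hB.1 j)) hB.2.1 hB.2.2

lemma bddAbove_betaSet (hmA : mA ≤ 𝓕) (hmB : mB ≤ 𝓕) :
    BddAbove (betaSet P mA mB) := ⟨1, betaSet_le_one hmA hmB⟩

lemma le_betaMix (hmA : mA ≤ 𝓕) (hmB : mB ≤ 𝓕)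
    {x : ℝ} (hx : x ∈ betaSet P mA mB) : x ≤ betaMix P mA mB :=
  le_csSup (bddAbove_betaSet (P := P) hmA hmB) hx

lemma betaMix_nonneg (hmA : mA ≤ 𝓕) (hmB : mB ≤ 𝓕) :
    0 ≤ betaMix P mA mB := le_betaMix hmA hmB zero_mem_betaSet

lemma betaMix_le {y : ℝ} (h : ∀ x ∈ betaSet P mA mB, x ≤ y) : betaMix P mA mB ≤ y :=
  Real.sSup_le (fun x hx => h x hx) (h 0 zero_mem_betaSet)

/-- A partition pair indexed by arbitrary fintypes gives a lower bound for `betaMix`. -/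
lemma half_sum_le_betaMix (hmA : mA ≤ 𝓕) (hmB : mB ≤ 𝓕)
    {ι κ : Type*} [Fintype ι] [Fintype κ] {E : ι → Set Ω} {F : κ → Set Ω}
    (hEmeas : ∀ i, MeasurableSet[mA] (E i)) (hEd : Pairwise (Function.onFun Disjoint E))
    (hEu : (⋃ i, E i) = univ)
    (hFmeas : ∀ j, MeasurableSet[mB] (F j)) (hFd : Pairwise (Function.onFun Disjoint F))
    (hFu : (⋃ j, F j) = univ) :
    (1/2 : ℝ) * ∑ i, ∑ j, |dft P (E i) (F j)| ≤ betaMix P mA mB := by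
  refine le_betaMix hmA hmB ?_
  set e := (Fintype.equivFin ι).symm
  set f := (Fintype.equivFin κ).symm
  refine ⟨Fintype.card ι, Fintype.card κ, E ∘ e, F ∘ f, ?_, ?_, ?_⟩
  · refine ⟨fun i => hEmeas _, fun i j hij => hEd (fun h => hij (e.injective h)), ?_⟩
    exact (e.surjective.iUnion_comp E).trans hEu
  · refine ⟨fun j => hFmeas _, fun i j hij => hFd (fun h => hij (f.injective h)), ?_⟩
    exact (f.surjective.iUnion_comp F).trans hFu
  · congr 1
    rw [← Equiv.sum_comp e (fun i => ∑ j, |dft P (E i) (F j)|)]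
    exact Finset.sum_congr rfl fun i _ =>
      (Equiv.sum_comp f (fun j => |dft P (E (e i)) (F j)|)).symm

end BetaMixAux

section ApproxAux
open scoped symmDiff ENNReal

/-- Approximation of sets in a generated σ-field by members of a generating algebra. -/
lemma approx_mem {Ω : Type*} {m₀ : MeasurableSpace Ω} [𝓕 : MeasurableSpace Ω]
    {P : Measure Ω} [IsProbabilityMeasure P] (hm₀ : m₀ ≤ 𝓕)
    {𝒟 : Set (Set Ω)} (hgen : m₀ = MeasurableSpace.generateFrom 𝒟) (hpi : IsPiSystem 𝒟)
    (hempty : (∅ : Set Ω) ∈ 𝒟) (hcompl : ∀ U ∈ 𝒟, Uᶜ ∈ 𝒟)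
    (hunion : ∀ U ∈ 𝒟, ∀ V ∈ 𝒟, U ∪ V ∈ 𝒟)
    {S : Set Ω} (hS : MeasurableSet[m₀] S) :
    ∀ ε : ℝ, 0 < ε → ∃ U ∈ 𝒟, (P (S ∆ U)).toReal < ε := by
  have hfinU : ∀ (k : ℕ) (U : ℕ → Set Ω), (∀ n, n < k → U n ∈ 𝒟) → (⋃ n < k, U n) ∈ 𝒟 := by
    intro k
    induction k with
    | zero => intro U _; simpa using hempty
    | succ k ih =>
      intro U hU
      rw [Set.biUnion_lt_succ]
      exact hunion _ (ih U fun n hn => hU n (hn.trans (Nat.lt_succ_self k))) _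
        (hU k (Nat.lt_succ_self k))
  have key : ∀ ⦃S : Set Ω⦄, MeasurableSet[m₀] S →
      ∀ ε : ℝ, 0 < ε → ∃ U ∈ 𝒟, (P (S ∆ U)).toReal < ε := by
    refine MeasurableSpace.induction_on_inter (m := m₀)
      (C := fun S _ => ∀ ε : ℝ, 0 < ε → ∃ U ∈ 𝒟, (P (S ∆ U)).toReal < ε) hgen hpi ?_ ?_ ?_ ?_
    · intro ε hε
      exact ⟨∅, hempty, by simp [hε]⟩
    · intro t ht ε hε
      exact ⟨t, ht, by simp [hε]⟩
    · intro t _ ht ε hε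
      obtain ⟨U, hU, hUε⟩ := ht ε hε
      exact ⟨Uᶜ, hcompl U hU, by rwa [compl_symmDiff_compl]⟩
    · intro f hdisj hmeas hf ε hε
      -- tail bound
      have hmeas' : ∀ n, MeasurableSet (f n) := fun n => hm₀ _ (hmeas n)
      have hsum : P (⋃ n, f n) = ∑' n, P (f n) := measure_iUnion hdisj hmeas'
      have hne : (∑' n, P (f n)) ≠ ∞ := by rw [← hsum]; exact measure_ne_top _ _
      have htail : Tendsto (fun N => ∑' n, P (f (n + N))) atTop (nhds 0) :=
        ENNReal.tendsto_sum_nat_add _ hne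
      have hev : ∀ᶠ N in atTop, (∑' n, P (f (n + N))) < ENNReal.ofReal (ε/2) :=
        htail.eventually_lt_const (by simp [hε])
      obtain ⟨N, hN⟩ := hev.exists
      -- approximants for n < N + 1  (we use N+1 to keep the count positive)
      have hchoice : ∀ n, ∃ U ∈ 𝒟, (P (f n ∆ U)).toReal < ε / (2 * (N+1)) := fun n =>
        hf n _ (by positivity)
      choose U hU hUε using hchoice
      refine ⟨⋃ n < N, U n, hfinU N U fun n _ => hU n, ?_⟩
      -- symmDiff inclusion
      have hincl : (⋃ n, f n) ∆ (⋃ n < N, U n)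
          ⊆ (⋃ n, f (n + N)) ∪ ⋃ n < N, (f n ∆ U n) := by
        intro ω hω
        rw [Set.mem_symmDiff] at hω
        rcases hω with ⟨hω1, hω2⟩ | ⟨hω1, hω2⟩
        · rw [mem_iUnion] at hω1
          obtain ⟨n, hn⟩ := hω1
          by_cases hnN : n < N
          · refine Or.inr (mem_biUnion hnN ?_)
            rw [Set.mem_symmDiff]
            exact Or.inl ⟨hn, fun h => hω2 (mem_biUnion hnN h)⟩
          · refine Or.inl (mem_iUnion.2 ⟨n - N, ?_⟩)
            rwa [Nat.sub_add_cancel (le_of_not_gt hnN)]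
        · rw [mem_iUnion₂] at hω1
          obtain ⟨n, hnN, hn⟩ := hω1
          refine Or.inr (mem_biUnion hnN ?_)
          rw [Set.mem_symmDiff]
          exact Or.inr ⟨hn, fun h => hω2 (mem_iUnion.2 ⟨n, h⟩)⟩
      have h2 : P (⋃ n < N, (f n ∆ U n)) ≤ ∑ n ∈ Finset.range N, P (f n ∆ U n) := by
        have heq : (⋃ n < N, (f n ∆ U n)) = ⋃ n ∈ Finset.range N, (f n ∆ U n) := by
          simp [Finset.mem_range]
        rw [heq]
        exact measure_biUnion_finset_le _ _
      have h1 : P (⋃ n, f (n + N)) < ENNReal.ofReal (ε/2) :=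
        lt_of_le_of_lt (measure_iUnion_le _) hN
      have h1' : (P (⋃ n, f (n + N))).toReal < ε/2 := by
        have := (ENNReal.toReal_lt_toReal (measure_ne_top _ _) ENNReal.ofReal_ne_top).2 h1
        rwa [ENNReal.toReal_ofReal (by positivity)] at this
      have h2' : ∑ n ∈ Finset.range N, (P (f n ∆ U n)).toReal ≤ ε/2 := by
        have hb : ∀ n ∈ Finset.range N, (P (f n ∆ U n)).toReal ≤ ε / (2 * (N+1)) :=
          fun n _ => le_of_lt (hUε n)
        have hcard := Finset.sum_le_card_nsmul (Finset.range N) _ _ hb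
        rw [Finset.card_range, nsmul_eq_mul] at hcard
        refine le_trans hcard ?_
        have hc : (0:ℝ) ≤ ε / (2 * ((N:ℝ)+1)) := by positivity
        have hmon : (N:ℝ) * (ε / (2 * ((N:ℝ)+1))) ≤ ((N:ℝ)+1) * (ε / (2 * ((N:ℝ)+1))) :=
          mul_le_mul_of_nonneg_right (by linarith) hc
        have heq2 : ((N:ℝ)+1) * (ε / (2 * ((N:ℝ)+1))) = ε/2 := by
          have hne0 : ((N:ℝ)+1) ≠ 0 := by positivity
          field_simp
        push_cast at hmon ⊢
        linarith [hmon, heq2.le, heq2.ge]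
      have hsub : (P ((⋃ n, f n) ∆ (⋃ n < N, U n))).toReal
          ≤ (P (⋃ n, f (n + N))).toReal + ∑ n ∈ Finset.range N, (P (f n ∆ U n)).toReal := by
        have hsub0 : P ((⋃ n, f n) ∆ (⋃ n < N, U n))
            ≤ P (⋃ n, f (n + N)) + ∑ n ∈ Finset.range N, P (f n ∆ U n) :=
          le_trans (measure_mono hincl) (le_trans (measure_union_le _ _) (by gcongr))
        have hne2 : P (⋃ n, f (n + N)) + ∑ n ∈ Finset.range N, P (f n ∆ U n) ≠ ∞ :=
          ENNReal.add_ne_top.2 ⟨measure_ne_top _ _,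
            (ENNReal.sum_lt_top.2 fun n _ => measure_lt_top P _).ne⟩
        refine le_trans (ENNReal.toReal_mono hne2 hsub0) (le_of_eq ?_)
        rw [ENNReal.toReal_add (measure_ne_top _ _)
          ((ENNReal.sum_lt_top.2 fun n _ => measure_lt_top P _).ne),
          ENNReal.toReal_sum fun n _ => measure_ne_top _ _]
      have := lt_of_le_of_lt hsub (by linarith : (P (⋃ n, f (n + N))).toReal
          + ∑ n ∈ Finset.range N, (P (f n ∆ U n)).toReal < ε)
      exact this
  exact fun ε hε => key hS ε hε

end ApproxAux

section SatClassAux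
open scoped symmDiff ENNReal

/-- Sets saturated w.r.t. finitely many `m₁`-measurable and `m₂`-measurable sets. -/
def SatClass {Ω : Type*} (m₁ m₂ : MeasurableSpace Ω) : Set (Set Ω) :=
  {U | ∃ (M₁ M₂ : ℕ) (G : Fin M₁ → Set Ω) (H : Fin M₂ → Set Ω),
    (∀ t, MeasurableSet[m₁] (G t)) ∧ (∀ t, MeasurableSet[m₂] (H t)) ∧ Sat G H U}

variable {Ω : Type*} {m₁ m₂ : MeasurableSpace Ω}

lemma satClass_empty : (∅ : Set Ω) ∈ SatClass m₁ m₂ :=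
  ⟨0, 0, Fin.elim0, Fin.elim0, fun t => t.elim0, fun t => t.elim0, Sat.empty⟩

lemma satClass_compl {U : Set Ω} (h : U ∈ SatClass m₁ m₂) : Uᶜ ∈ SatClass m₁ m₂ := by
  obtain ⟨M₁, M₂, G, H, hG, hH, hU⟩ := h
  exact ⟨M₁, M₂, G, H, hG, hH, hU.compl⟩

private lemma append_meas {M M' : ℕ} {m : MeasurableSpace Ω} {G : Fin M → Set Ω}
    {G' : Fin M' → Set Ω} (hG : ∀ t, MeasurableSet[m] (G t))
    (hG' : ∀ t, MeasurableSet[m] (G' t)) : ∀ t, MeasurableSet[m] (Fin.append G G' t) := by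
  intro t
  refine Fin.addCases (motive := fun t => MeasurableSet[m] (Fin.append G G' t)) ?_ ?_ t
  · intro i; rw [Fin.append_left]; exact hG i
  · intro i; rw [Fin.append_right]; exact hG' i

private lemma append_old_left {M M' : ℕ} {G : Fin M → Set Ω} {G' : Fin M' → Set Ω} :
    ∀ t, ∃ t', G t = Fin.append G G' t' := fun t =>
  ⟨Fin.castAdd M' t, (Fin.append_left G G' t).symm⟩

private lemma append_old_right {M M' : ℕ} {G : Fin M → Set Ω} {G' : Fin M' → Set Ω} :
    ∀ t, ∃ t', G' t = Fin.append G G' t' := fun t =>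
  ⟨Fin.natAdd M t, (Fin.append_right G G' t).symm⟩

lemma satClass_union {U V : Set Ω} (hU : U ∈ SatClass m₁ m₂) (hV : V ∈ SatClass m₁ m₂) :
    U ∪ V ∈ SatClass m₁ m₂ := by
  obtain ⟨M₁, M₂, G, H, hG, hH, hU⟩ := hU
  obtain ⟨M₁', M₂', G', H', hG', hH', hV⟩ := hV
  exact ⟨M₁ + M₁', M₂ + M₂', Fin.append G G', Fin.append H H', append_meas hG hG',
    append_meas hH hH',
    (hU.mono append_old_left append_old_left).union
      (hV.mono append_old_right append_old_right)⟩

lemma satClass_inter {U V : Set Ω} (hU : U ∈ SatClass m₁ m₂) (hV : V ∈ SatClass m₁ m₂) :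
    U ∩ V ∈ SatClass m₁ m₂ := by
  obtain ⟨M₁, M₂, G, H, hG, hH, hU⟩ := hU
  obtain ⟨M₁', M₂', G', H', hG', hH', hV⟩ := hV
  exact ⟨M₁ + M₁', M₂ + M₂', Fin.append G G', Fin.append H H', append_meas hG hG',
    append_meas hH hH',
    (hU.mono append_old_left append_old_left).inter
      (hV.mono append_old_right append_old_right)⟩

lemma satClass_pi : IsPiSystem (SatClass m₁ m₂) := fun U hU V hV _ => satClass_inter hU hV

lemma satClass_basic_left {S : Set Ω} (hS : MeasurableSet[m₁] S) : S ∈ SatClass m₁ m₂ :=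
  ⟨1, 0, fun _ => S, Fin.elim0, fun _ => hS, fun t => t.elim0,
    fun _ _ hG _ h => (hG 0).1 h⟩

lemma satClass_basic_right {S : Set Ω} (hS : MeasurableSet[m₂] S) : S ∈ SatClass m₁ m₂ :=
  ⟨0, 1, Fin.elim0, fun _ => S, fun t => t.elim0, fun _ => hS,
    fun _ _ _ hH h => (hH 0).1 h⟩

lemma satClass_measurableSet {U : Set Ω} (h : U ∈ SatClass m₁ m₂) :
    MeasurableSet[m₁ ⊔ m₂] U := by
  obtain ⟨M₁, M₂, G, H, hG, hH, hU⟩ := h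
  exact hU.measurableSet hG hH

lemma generateFrom_satClass : m₁ ⊔ m₂ = MeasurableSpace.generateFrom (SatClass m₁ m₂) := by
  refine le_antisymm (sup_le ?_ ?_) (MeasurableSpace.generateFrom_le
    fun U hU => satClass_measurableSet hU)
  · exact fun S hS => MeasurableSpace.measurableSet_generateFrom (satClass_basic_left hS)
  · exact fun S hS => MeasurableSpace.measurableSet_generateFrom (satClass_basic_right hS)

lemma exists_common_families {a : ℕ} {W : Fin a → Set Ω} (h : ∀ k, W k ∈ SatClass m₁ m₂) :
    ∃ (ι κ : Type) (_ : Fintype ι) (_ : Fintype κ) (G : ι → Set Ω) (H : κ → Set Ω),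
      (∀ t, MeasurableSet[m₁] (G t)) ∧ (∀ t, MeasurableSet[m₂] (H t)) ∧
        ∀ k, Sat G H (W k) := by
  choose M₁ M₂ G H hG hH hSat using h
  exact ⟨(Σ k : Fin a, Fin (M₁ k)), (Σ k : Fin a, Fin (M₂ k)), inferInstance, inferInstance,
    fun x => G x.1 x.2, fun x => H x.1 x.2, fun x => hG x.1 x.2, fun x => hH x.1 x.2,
    fun k => (hSat k).mono (fun t => ⟨⟨k, t⟩, rfl⟩) (fun t => ⟨⟨k, t⟩, rfl⟩)⟩

end SatClassAux

section DisjointifyAux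
open scoped symmDiff ENNReal

variable {Ω : Type*} {a : ℕ}

/-- Disjointification of a finite family of sets. -/
def dsj (W : Fin a → Set Ω) (k : Fin a) : Set Ω := W k \ ⋃ (k' : Fin a) (_ : k' < k), W k'

lemma dsj_subset (W : Fin a → Set Ω) (k : Fin a) : dsj W k ⊆ W k := diff_subset

lemma dsj_disjoint (W : Fin a → Set Ω) : Pairwise (Function.onFun Disjoint (dsj W)) := by
  have key : ∀ k k' : Fin a, k < k' → Disjoint (dsj W k) (dsj W k') := by
    intro k k' hkk'
    rw [Set.disjoint_left]
    intro ω hω hω'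
    exact hω'.2 (mem_iUnion₂.2 ⟨k, hkk', hω.1⟩)
  intro k k' hne
  rcases lt_or_gt_of_ne hne with h | h
  · exact key k k' h
  · exact (key k' k h).symm

lemma symmDiff_dsj_subset {A : Fin a → Set Ω} (hA : Pairwise (Function.onFun Disjoint A))
    (W : Fin a → Set Ω) (k : Fin a) :
    A k ∆ dsj W k ⊆ ⋃ k', (A k' ∆ W k') := by
  intro ω hω
  rw [Set.mem_symmDiff] at hω
  rcases hω with ⟨hωA, hωW⟩ | ⟨hωW, hωA⟩
  · by_cases hωWk : ω ∈ W k
    · -- then ω must be in some W k' with k' < k, and ω ∉ A k' by disjointness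
      have : ω ∈ ⋃ (k' : Fin a) (_ : k' < k), W k' := by
        by_contra h
        exact hωW ⟨hωWk, h⟩
      rw [mem_iUnion₂] at this
      obtain ⟨k', hk', hωk'⟩ := this
      have hωnA : ω ∉ A k' := fun h =>
        Set.disjoint_left.1 (hA (ne_of_lt hk')) h hωA
      refine mem_iUnion.2 ⟨k', ?_⟩
      rw [Set.mem_symmDiff]
      exact Or.inr ⟨hωk', hωnA⟩
    · refine mem_iUnion.2 ⟨k, ?_⟩
      rw [Set.mem_symmDiff]
      exact Or.inl ⟨hωA, hωWk⟩
  · refine mem_iUnion.2 ⟨k, ?_⟩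
    rw [Set.mem_symmDiff]
    exact Or.inr ⟨hωW.1, hωA⟩

end DisjointifyAux

section SumHelpers
open scoped symmDiff ENNReal

lemma abs_mul_sub_mul {x y u v : ℝ} (hy : 0 ≤ y) (hu : 0 ≤ u) :
    |x * y - u * v| ≤ |x - u| * y + u * |y - v| := by
  have h : x * y - u * v = (x - u) * y + u * (y - v) := by ring
  rw [h]
  refine le_trans (abs_add_le _ _) ?_
  rw [abs_mul, abs_mul, abs_of_nonneg hy, abs_of_nonneg hu]

lemma sum_prod_factor {α₁ α₂ β₁ β₂ : Type*} [Fintype α₁] [Fintype α₂] [Fintype β₁]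
    [Fintype β₂] (f : α₁ → β₁ → ℝ) (g : α₂ → β₂ → ℝ) :
    ∑ p : α₁ × α₂, ∑ q : β₁ × β₂, f p.1 q.1 * g p.2 q.2
      = (∑ x, ∑ y, f x y) * (∑ x, ∑ y, g x y) := by
  have h1 : ∀ p : α₁ × α₂, ∑ q : β₁ × β₂, f p.1 q.1 * g p.2 q.2
      = (∑ y, f p.1 y) * (∑ y, g p.2 y) := by
    intro p
    rw [Fintype.sum_prod_type, Finset.sum_mul_sum]
  rw [Finset.sum_congr rfl fun p _ => h1 p, Fintype.sum_prod_type]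
  rw [show (∑ x, ∑ y, f x y) * (∑ x, ∑ y, g x y)
      = ∑ x1, (∑ y, f x1 y) * (∑ x2, ∑ y, g x2 y) by rw [Finset.sum_mul]]
  refine Finset.sum_congr rfl fun x1 _ => ?_
  rw [show (∑ y, f x1 y) * (∑ x2, ∑ y, g x2 y)
      = ∑ x2, (∑ y, f x1 y) * (∑ y, g x2 y) by rw [Finset.mul_sum]]

end SumHelpers

section ErrAux
open scoped symmDiff ENNReal

variable {Ω : Type*} [𝓕 : MeasurableSpace Ω] {P : Measure Ω} [IsProbabilityMeasure P]

/-- Error propagation for the half defect sum under set approximation. -/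
lemma half_dft_sum_err {a b : ℕ} {A W : Fin a → Set Ω} {B V : Fin b → Set Ω}
    (hAm : ∀ k, MeasurableSet (A k)) (hWm : ∀ k, MeasurableSet (W k))
    (hBm : ∀ l, MeasurableSet (B l)) (hVm : ∀ l, MeasurableSet (V l))
    {da db : ℝ} (hW : ∀ k, (P (A k ∆ W k)).toReal ≤ da)
    (hV : ∀ l, (P (B l ∆ V l)).toReal ≤ db) :
    (1/2 : ℝ) * ∑ k, ∑ l, |dft P (A k) (B l)|
      ≤ (1/2 : ℝ) * ∑ k, ∑ l, |dft P (W k) (V l)| + (a * b : ℝ) * (da + db) := by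
  have hterm : ∀ k l, |dft P (A k) (B l)| ≤ |dft P (W k) (V l)| + 2 * (da + db) := by
    intro k l
    have h1 := abs_dft_sub (P := P) (hAm k) (hBm l) (hWm k) (hVm l)
    have h2 : |dft P (A k) (B l)| - |dft P (W k) (V l)|
        ≤ |dft P (A k) (B l) - dft P (W k) (V l)| := abs_sub_abs_le_abs_sub _ _
    have h3 : (P (A k ∆ W k)).toReal + (P (B l ∆ V l)).toReal ≤ da + db :=
      add_le_add (hW k) (hV l)
    nlinarith [h1, h2, h3]
  have hsum : ∑ k, ∑ l, |dft P (A k) (B l)|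
      ≤ ∑ k, ∑ l, (|dft P (W k) (V l)| + 2 * (da + db)) :=
    Finset.sum_le_sum fun k _ => Finset.sum_le_sum fun l _ => hterm k l
  have hconst : ∑ (_ : Fin a), ∑ (_ : Fin b), (2 * (da + db) : ℝ) = (a * b : ℝ) * (2 * (da+db)) := by
    simp [Finset.sum_const, Finset.card_univ]
    ring
  have hsplit : ∑ k, ∑ l, (|dft P (W k) (V l)| + 2 * (da + db))
      = ∑ k, ∑ l, |dft P (W k) (V l)| + (a * b : ℝ) * (2 * (da + db)) := by
    rw [← hconst, ← Finset.sum_add_distrib]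
    exact Finset.sum_congr rfl fun k _ => by rw [← Finset.sum_add_distrib]
  rw [hsplit] at hsum
  linarith

/-- The toReal error of disjointification. -/
lemma dsj_err {a : ℕ} {A W : Fin a → Set Ω} (hA : Pairwise (Function.onFun Disjoint A))
    {η : ℝ} (hη : 0 ≤ η) (herr : ∀ k, (P (A k ∆ W k)).toReal ≤ η) (k : Fin a) :
    (P (A k ∆ dsj W k)).toReal ≤ (a : ℝ) * η := by
  have hsub := symmDiff_dsj_subset hA W k
  have h1 : P (A k ∆ dsj W k) ≤ ∑ k', P (A k' ∆ W k') :=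
    le_trans (measure_mono hsub) (measure_iUnion_fintype_le _ _)
  have h2 : (P (A k ∆ dsj W k)).toReal ≤ ∑ k', (P (A k' ∆ W k')).toReal := by
    refine le_trans (ENNReal.toReal_mono ?_ h1) (le_of_eq ?_)
    · exact (ENNReal.sum_lt_top.2 fun n _ => measure_lt_top P _).ne
    · exact ENNReal.toReal_sum fun n _ => measure_ne_top _ _
  refine le_trans h2 ?_
  calc ∑ k', (P (A k' ∆ W k')).toReal ≤ ∑ (_ : Fin a), η := Finset.sum_le_sum fun k' _ => herr k'
    _ = (a : ℝ) * η := by simp [Finset.sum_const, Finset.card_univ, nsmul_eq_mul]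

end ErrAux

section CoreAux
open scoped symmDiff ENNReal

lemma core_bound {Ω : Type*} {m₁ m₂ n₁ n₂ : MeasurableSpace Ω} [𝓕 : MeasurableSpace Ω]
    {P : Measure Ω} [IsProbabilityMeasure P]
    (hm₁ : m₁ ≤ 𝓕) (hm₂ : m₂ ≤ 𝓕) (hn₁ : n₁ ≤ 𝓕) (hn₂ : n₂ ≤ 𝓕)
    (hInd : Indep (m₁ ⊔ n₁) (m₂ ⊔ n₂) P)
    {ι₁ ι₂ κ₁ κ₂ : Type} [Fintype ι₁] [Fintype ι₂] [Fintype κ₁] [Fintype κ₂]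
    {G : ι₁ → Set Ω} {G' : ι₂ → Set Ω} {H : κ₁ → Set Ω} {H' : κ₂ → Set Ω}
    (hG : ∀ t, MeasurableSet[m₁] (G t)) (hG' : ∀ t, MeasurableSet[m₂] (G' t))
    (hH : ∀ t, MeasurableSet[n₁] (H t)) (hH' : ∀ t, MeasurableSet[n₂] (H' t))
    {a b : ℕ} {W : Fin a → Set Ω} {V : Fin b → Set Ω}
    (hWd : Pairwise (Function.onFun Disjoint W)) (hVd : Pairwise (Function.onFun Disjoint V))
    (hSatW : ∀ k, Sat G G' (W k)) (hSatV : ∀ l, Sat H H' (V l)) :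
    (1/2 : ℝ) * ∑ k, ∑ l, |dft P (W k) (V l)| ≤ betaMix P m₁ n₁ + betaMix P m₂ n₂ := by
  classical
  -- cells and cell pairs
  set cpA : (ι₁ → Bool) × (ι₂ → Bool) → Set Ω :=
    fun p => cellOf G p.1 ∩ cellOf G' p.2 with hcpA_def
  set cpB : (κ₁ → Bool) × (κ₂ → Bool) → Set Ω :=
    fun q => cellOf H q.1 ∩ cellOf H' q.2 with hcpB_def
  -- indicator coefficients
  set χ : Fin a → (ι₁ → Bool) × (ι₂ → Bool) → ℝ :=
    fun k p => if (W k ∩ cpA p).Nonempty then 1 else 0 with hχ_def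
  set ψ : Fin b → (κ₁ → Bool) × (κ₂ → Bool) → ℝ :=
    fun l q => if (V l ∩ cpB q).Nonempty then 1 else 0 with hψ_def
  -- measurability (ambient)
  have hcellG : ∀ x, MeasurableSet (cellOf G x) := fun x => hm₁ _ (cellOf_measurable hG x)
  have hcellG' : ∀ x, MeasurableSet (cellOf G' x) := fun x => hm₂ _ (cellOf_measurable hG' x)
  have hcellH : ∀ x, MeasurableSet (cellOf H x) := fun x => hn₁ _ (cellOf_measurable hH x)
  have hcellH' : ∀ x, MeasurableSet (cellOf H' x) := fun x => hn₂ _ (cellOf_measurable hH' x)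
  have hcpAm : ∀ p, MeasurableSet (cpA p) := fun p => (hcellG p.1).inter (hcellG' p.2)
  have hcpBm : ∀ q, MeasurableSet (cpB q) := fun q => (hcellH q.1).inter (hcellH' q.2)
  have hWm : ∀ k, MeasurableSet (W k) := fun k =>
    (sup_le hm₁ hm₂) _ ((hSatW k).measurableSet hG hG')
  have hVm : ∀ l, MeasurableSet (V l) := fun l =>
    (sup_le hn₁ hn₂) _ ((hSatV l).measurableSet hH hH')
  -- partition properties of the cell pairs
  have hcpAd : Pairwise (Function.onFun Disjoint cpA) := by
    intro p p' hne
    have h : p.1 ≠ p'.1 ∨ p.2 ≠ p'.2 := by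
      by_contra hc
      push_neg at hc
      exact hne (Prod.ext hc.1 hc.2)
    rcases h with h | h
    · exact ((cellOf_pairwise_disjoint G) h).mono inter_subset_left inter_subset_left
    · exact ((cellOf_pairwise_disjoint G') h).mono inter_subset_right inter_subset_right
  have hcpAu : (⋃ p, cpA p) = univ := by
    ext ω
    simp only [mem_iUnion, mem_univ, iff_true]
    exact ⟨(patt G ω, patt G' ω), mem_cellOf_patt G ω, mem_cellOf_patt G' ω⟩
  have hcpBd : Pairwise (Function.onFun Disjoint cpB) := by
    intro q q' hne
    have h : q.1 ≠ q'.1 ∨ q.2 ≠ q'.2 := by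
      by_contra hc
      push_neg at hc
      exact hne (Prod.ext hc.1 hc.2)
    rcases h with h | h
    · exact ((cellOf_pairwise_disjoint H) h).mono inter_subset_left inter_subset_left
    · exact ((cellOf_pairwise_disjoint H') h).mono inter_subset_right inter_subset_right
  have hcpBu : (⋃ q, cpB q) = univ := by
    ext ω
    simp only [mem_iUnion, mem_univ, iff_true]
    exact ⟨(patt H ω, patt H' ω), mem_cellOf_patt H ω, mem_cellOf_patt H' ω⟩
  -- saturation: nonempty intersection forces inclusion
  have hWsub : ∀ k p, (W k ∩ cpA p).Nonempty → cpA p ⊆ W k := fun k p h =>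
    (hSatW k).subset_of_inter_nonempty h
  have hVsub : ∀ l q, (V l ∩ cpB q).Nonempty → cpB q ⊆ V l := fun l q h =>
    (hSatV l).subset_of_inter_nonempty h
  have hχ_nonneg : ∀ k p, 0 ≤ χ k p := by
    intro k p; rw [hχ_def]; dsimp only; split <;> norm_num
  have hψ_nonneg : ∀ l q, 0 ≤ ψ l q := by
    intro l q; rw [hψ_def]; dsimp only; split <;> norm_num
  -- measure identities
  have hPW : ∀ k, (P (W k)).toReal = ∑ p, χ k p * (P (cpA p)).toReal := by
    intro k
    rw [← toReal_sum_inter (P := P) hcpAm hcpAd hcpAu (hWm k)]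
    refine Finset.sum_congr rfl fun p _ => ?_
    by_cases h : (W k ∩ cpA p).Nonempty
    · rw [Set.inter_eq_self_of_subset_right (hWsub k p h), hχ_def]
      dsimp only
      rw [if_pos h, one_mul]
    · rw [not_nonempty_iff_eq_empty.1 h, hχ_def]
      dsimp only
      rw [if_neg h, zero_mul, measure_empty, ENNReal.toReal_zero]
  have hPV : ∀ l, (P (V l)).toReal = ∑ q, ψ l q * (P (cpB q)).toReal := by
    intro l
    rw [← toReal_sum_inter (P := P) hcpBm hcpBd hcpBu (hVm l)]
    refine Finset.sum_congr rfl fun q _ => ?_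
    by_cases h : (V l ∩ cpB q).Nonempty
    · rw [Set.inter_eq_self_of_subset_right (hVsub l q h), hψ_def]
      dsimp only
      rw [if_pos h, one_mul]
    · rw [not_nonempty_iff_eq_empty.1 h, hψ_def]
      dsimp only
      rw [if_neg h, zero_mul, measure_empty, ENNReal.toReal_zero]
  -- product partition
  have hprodm : ∀ pq : ((ι₁ → Bool) × (ι₂ → Bool)) × ((κ₁ → Bool) × (κ₂ → Bool)),
      MeasurableSet (cpA pq.1 ∩ cpB pq.2) := fun pq => (hcpAm pq.1).inter (hcpBm pq.2)
  have hprodd : Pairwise (Function.onFun Disjoint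
      fun pq : ((ι₁ → Bool) × (ι₂ → Bool)) × ((κ₁ → Bool) × (κ₂ → Bool)) =>
        cpA pq.1 ∩ cpB pq.2) := by
    intro pq pq' hne
    have h : pq.1 ≠ pq'.1 ∨ pq.2 ≠ pq'.2 := by
      by_contra hc
      push_neg at hc
      exact hne (Prod.ext hc.1 hc.2)
    rcases h with h | h
    · exact (hcpAd h).mono inter_subset_left inter_subset_left
    · exact (hcpBd h).mono inter_subset_right inter_subset_right
  have hprodu : (⋃ pq : ((ι₁ → Bool) × (ι₂ → Bool)) × ((κ₁ → Bool) × (κ₂ → Bool)),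
      cpA pq.1 ∩ cpB pq.2) = univ := by
    ext ω
    simp only [mem_iUnion, mem_univ, iff_true]
    exact ⟨((patt G ω, patt G' ω), (patt H ω, patt H' ω)),
      ⟨mem_cellOf_patt G ω, mem_cellOf_patt G' ω⟩,
      ⟨mem_cellOf_patt H ω, mem_cellOf_patt H' ω⟩⟩
  have hPWV : ∀ k l, (P (W k ∩ V l)).toReal
      = ∑ p, ∑ q, χ k p * ψ l q * (P (cpA p ∩ cpB q)).toReal := by
    intro k l
    rw [← toReal_sum_inter (P := P) hprodm hprodd hprodu ((hWm k).inter (hVm l)),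
      Fintype.sum_prod_type]
    refine Finset.sum_congr rfl fun p _ => Finset.sum_congr rfl fun q _ => ?_
    by_cases hw : (W k ∩ cpA p).Nonempty
    · by_cases hv : (V l ∩ cpB q).Nonempty
      · have heq : (W k ∩ V l) ∩ (cpA p ∩ cpB q) = cpA p ∩ cpB q :=
          Set.inter_eq_self_of_subset_right
            (fun ω hω => ⟨hWsub k p hw hω.1, hVsub l q hv hω.2⟩)
        rw [heq, hχ_def, hψ_def]
        dsimp only
        rw [if_pos hw, if_pos hv, one_mul, one_mul]
      · have hz : P ((W k ∩ V l) ∩ (cpA p ∩ cpB q)) = 0 := by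
          refine measure_mono_null (fun ω hω => ?_ : _ ⊆ V l ∩ cpB q) ?_
          · exact ⟨hω.1.2, hω.2.2⟩
          · rw [not_nonempty_iff_eq_empty.1 hv, measure_empty]
        rw [hz, hψ_def]
        dsimp only
        rw [if_neg hv, ENNReal.toReal_zero, mul_zero, zero_mul]
    · have hz : P ((W k ∩ V l) ∩ (cpA p ∩ cpB q)) = 0 := by
        refine measure_mono_null (fun ω hω => ?_ : _ ⊆ W k ∩ cpA p) ?_
        · exact ⟨hω.1.1, hω.2.1⟩
        · rw [not_nonempty_iff_eq_empty.1 hw, measure_empty]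
      rw [hz, hχ_def]
      dsimp only
      rw [if_neg hw, ENNReal.toReal_zero, zero_mul, zero_mul]
  -- independence splittings
  have hIndP : ∀ s t, MeasurableSet[m₁ ⊔ n₁] s → MeasurableSet[m₂ ⊔ n₂] t →
      P (s ∩ t) = P s * P t := fun s t hs ht => (Indep_iff _ _ _).1 hInd s t hs ht
  have hIndA : Indep m₁ m₂ P :=
    indep_of_indep_of_le_left (indep_of_indep_of_le_right hInd le_sup_left) le_sup_left
  have hIndB : Indep n₁ n₂ P :=
    indep_of_indep_of_le_left (indep_of_indep_of_le_right hInd le_sup_right) le_sup_right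
  have hcell_split : ∀ p q, (P (cpA p ∩ cpB q)).toReal
      = (P (cellOf G p.1 ∩ cellOf H q.1)).toReal
        * (P (cellOf G' p.2 ∩ cellOf H' q.2)).toReal := by
    intro p q
    have hre : cpA p ∩ cpB q
        = (cellOf G p.1 ∩ cellOf H q.1) ∩ (cellOf G' p.2 ∩ cellOf H' q.2) := by
      rw [hcpA_def, hcpB_def]
      exact Set.inter_inter_inter_comm _ _ _ _
    rw [hre, hIndP _ _
      (((le_sup_left : m₁ ≤ m₁ ⊔ n₁) _ (cellOf_measurable hG p.1)).inter
        ((le_sup_right : n₁ ≤ m₁ ⊔ n₁) _ (cellOf_measurable hH q.1)))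
      (((le_sup_left : m₂ ≤ m₂ ⊔ n₂) _ (cellOf_measurable hG' p.2)).inter
        ((le_sup_right : n₂ ≤ m₂ ⊔ n₂) _ (cellOf_measurable hH' q.2))),
      ENNReal.toReal_mul]
  have hcpA_split : ∀ p, (P (cpA p)).toReal
      = (P (cellOf G p.1)).toReal * (P (cellOf G' p.2)).toReal := by
    intro p
    rw [hcpA_def]
    dsimp only
    rw [(Indep_iff _ _ _).1 hIndA _ _ (cellOf_measurable hG p.1) (cellOf_measurable hG' p.2),
      ENNReal.toReal_mul]
  have hcpB_split : ∀ q, (P (cpB q)).toReal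
      = (P (cellOf H q.1)).toReal * (P (cellOf H' q.2)).toReal := by
    intro q
    rw [hcpB_def]
    dsimp only
    rw [(Indep_iff _ _ _).1 hIndB _ _ (cellOf_measurable hH q.1) (cellOf_measurable hH' q.2),
      ENNReal.toReal_mul]
  -- the defect identity
  set D : (ι₁ → Bool) × (ι₂ → Bool) → (κ₁ → Bool) × (κ₂ → Bool) → ℝ :=
    fun p q => (P (cpA p ∩ cpB q)).toReal - (P (cpA p)).toReal * (P (cpB q)).toReal
    with hD_def
  have hdft : ∀ k l, dft P (W k) (V l) = ∑ p, ∑ q, χ k p * ψ l q * D p q := by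
    intro k l
    rw [dft, hPWV, hPW, hPV, Finset.sum_mul_sum]
    rw [← Finset.sum_sub_distrib]
    refine Finset.sum_congr rfl fun p _ => ?_
    rw [← Finset.sum_sub_distrib]
    refine Finset.sum_congr rfl fun q _ => ?_
    rw [hD_def]
    ring
  -- bound per (k, l)
  have habs : ∀ k l, |dft P (W k) (V l)| ≤ ∑ p, ∑ q, χ k p * ψ l q * |D p q| := by
    intro k l
    rw [hdft]
    refine le_trans (Finset.abs_sum_le_sum_abs _ _) (Finset.sum_le_sum fun p _ => ?_)
    refine le_trans (Finset.abs_sum_le_sum_abs _ _) (Finset.sum_le_sum fun q _ => ?_)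
    rw [abs_mul, abs_mul, abs_of_nonneg (hχ_nonneg k p), abs_of_nonneg (hψ_nonneg l q)]
  -- sum of indicators at most one
  have hsumχ : ∀ p, ∑ k, χ k p ≤ 1 := by
    intro p
    rw [hχ_def]
    dsimp only
    rw [Finset.sum_boole]
    norm_cast
    refine Finset.card_le_one.2 fun k hk k' hk' => ?_
    by_contra hne
    obtain ⟨ω, hωW, hωp⟩ := (Finset.mem_filter.1 hk).2
    have hsub' := hWsub k' p (Finset.mem_filter.1 hk').2
    have hsub := hWsub k p (Finset.mem_filter.1 hk).2
    exact Set.disjoint_left.1 (hWd hne) (hsub hωp) (hsub' hωp)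
  have hsumψ : ∀ q, ∑ l, ψ l q ≤ 1 := by
    intro q
    rw [hψ_def]
    dsimp only
    rw [Finset.sum_boole]
    norm_cast
    refine Finset.card_le_one.2 fun l hl l' hl' => ?_
    by_contra hne
    obtain ⟨ω, hωV, hωq⟩ := (Finset.mem_filter.1 hl).2
    have hsub' := hVsub l' q (Finset.mem_filter.1 hl').2
    have hsub := hVsub l q (Finset.mem_filter.1 hl).2
    exact Set.disjoint_left.1 (hVd hne) (hsub hωq) (hsub' hωq)
  have hχsum_nonneg : ∀ p, 0 ≤ ∑ k, χ k p := fun p =>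
    Finset.sum_nonneg fun k _ => hχ_nonneg k p
  have hψsum_nonneg : ∀ q, 0 ≤ ∑ l, ψ l q := fun q =>
    Finset.sum_nonneg fun l _ => hψ_nonneg l q
  -- interchange sums
  have hswap : ∑ k, ∑ l, ∑ p, ∑ q, χ k p * ψ l q * |D p q|
      = ∑ p, ∑ q, (∑ k, χ k p) * (∑ l, ψ l q) * |D p q| := by
    have step1 : ∀ k, ∑ l, ∑ p, ∑ q, χ k p * ψ l q * |D p q|
        = ∑ p, ∑ q, χ k p * (∑ l, ψ l q) * |D p q| := by
      intro k
      rw [Finset.sum_comm]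
      refine Finset.sum_congr rfl fun p _ => ?_
      rw [Finset.sum_comm]
      refine Finset.sum_congr rfl fun q _ => ?_
      rw [show ∑ l, χ k p * ψ l q * |D p q| = ∑ l, ψ l q * (χ k p * |D p q|) from
        Finset.sum_congr rfl fun l _ => by ring, ← Finset.sum_mul]
      ring
    rw [Finset.sum_congr rfl fun k _ => step1 k, Finset.sum_comm]
    refine Finset.sum_congr rfl fun p _ => ?_
    rw [Finset.sum_comm]
    refine Finset.sum_congr rfl fun q _ => ?_
    rw [show ∑ k, χ k p * (∑ l, ψ l q) * |D p q| = ∑ k, χ k p * ((∑ l, ψ l q) * |D p q|) from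
      Finset.sum_congr rfl fun k _ => by ring, ← Finset.sum_mul]
    ring
  -- telescope bound for |D|
  have hDle : ∀ p q, |D p q|
      ≤ |dft P (cellOf G p.1) (cellOf H q.1)| * (P (cellOf G' p.2 ∩ cellOf H' q.2)).toReal
        + (P (cellOf G p.1)).toReal * (P (cellOf H q.1)).toReal
          * |dft P (cellOf G' p.2) (cellOf H' q.2)| := by
    intro p q
    rw [hD_def]
    dsimp only
    rw [hcell_split, hcpA_split, hcpB_split]
    have hre : (P (cellOf G p.1)).toReal * (P (cellOf G' p.2)).toReal
        * ((P (cellOf H q.1)).toReal * (P (cellOf H' q.2)).toReal)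
        = ((P (cellOf G p.1)).toReal * (P (cellOf H q.1)).toReal)
          * ((P (cellOf G' p.2)).toReal * (P (cellOf H' q.2)).toReal) := by ring
    rw [hre]
    exact abs_mul_sub_mul ENNReal.toReal_nonneg
      (mul_nonneg ENNReal.toReal_nonneg ENNReal.toReal_nonneg)
  -- partition sums equal to one
  have hsum_e2 : ∑ x : ι₂ → Bool, ∑ y : κ₂ → Bool,
      (P (cellOf G' x ∩ cellOf H' y)).toReal = 1 := by
    have hx : ∀ x, ∑ y, (P (cellOf G' x ∩ cellOf H' y)).toReal = (P (cellOf G' x)).toReal :=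
      fun x => toReal_sum_inter (P := P) hcellH' (cellOf_pairwise_disjoint H')
        (iUnion_cellOf H') (hcellG' x)
    rw [Finset.sum_congr rfl fun x _ => hx x]
    have h := toReal_sum_inter (P := P) hcellG' (cellOf_pairwise_disjoint G')
      (iUnion_cellOf G') (MeasurableSet.univ (α := Ω))
    simpa [Set.univ_inter] using h
  have hsum_q1 : ∑ x : ι₁ → Bool, (P (cellOf G x)).toReal = 1 := by
    have h := toReal_sum_inter (P := P) hcellG (cellOf_pairwise_disjoint G)
      (iUnion_cellOf G) (MeasurableSet.univ (α := Ω))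
    simpa [Set.univ_inter] using h
  have hsum_r1 : ∑ y : κ₁ → Bool, (P (cellOf H y)).toReal = 1 := by
    have h := toReal_sum_inter (P := P) hcellH (cellOf_pairwise_disjoint H)
      (iUnion_cellOf H) (MeasurableSet.univ (α := Ω))
    simpa [Set.univ_inter] using h
  have hsum_f1 : ∑ x : ι₁ → Bool, ∑ y : κ₁ → Bool,
      (P (cellOf G x)).toReal * (P (cellOf H y)).toReal = 1 := by
    have hx : ∀ x : ι₁ → Bool, ∑ y : κ₁ → Bool,
        (P (cellOf G x)).toReal * (P (cellOf H y)).toReal = (P (cellOf G x)).toReal := by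
      intro x
      rw [← Finset.mul_sum, hsum_r1, mul_one]
    rw [Finset.sum_congr rfl fun x _ => hx x, hsum_q1]
  -- beta bounds for the cell partitions
  have hbeta1 : ∑ x : ι₁ → Bool, ∑ y : κ₁ → Bool,
      |dft P (cellOf G x) (cellOf H y)| ≤ 2 * betaMix P m₁ n₁ := by
    have h := half_sum_le_betaMix (P := P) hm₁ hn₁ (cellOf_measurable hG)
      (cellOf_pairwise_disjoint G) (iUnion_cellOf G) (cellOf_measurable hH)
      (cellOf_pairwise_disjoint H) (iUnion_cellOf H)
    linarith
  have hbeta2 : ∑ x : ι₂ → Bool, ∑ y : κ₂ → Bool,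
      |dft P (cellOf G' x) (cellOf H' y)| ≤ 2 * betaMix P m₂ n₂ := by
    have h := half_sum_le_betaMix (P := P) hm₂ hn₂ (cellOf_measurable hG')
      (cellOf_pairwise_disjoint G') (iUnion_cellOf G') (cellOf_measurable hH')
      (cellOf_pairwise_disjoint H') (iUnion_cellOf H')
    linarith
  -- sum of |D| is controlled
  have hDsum : ∑ p, ∑ q, |D p q| ≤ 2 * betaMix P m₁ n₁ + 2 * betaMix P m₂ n₂ := by
    have hstep : ∑ p, ∑ q, |D p q| ≤ ∑ p : (ι₁ → Bool) × (ι₂ → Bool),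
        ∑ q : (κ₁ → Bool) × (κ₂ → Bool),
        (|dft P (cellOf G p.1) (cellOf H q.1)| * (P (cellOf G' p.2 ∩ cellOf H' q.2)).toReal
          + (P (cellOf G p.1)).toReal * (P (cellOf H q.1)).toReal
            * |dft P (cellOf G' p.2) (cellOf H' q.2)|) :=
      Finset.sum_le_sum fun p _ => Finset.sum_le_sum fun q _ => hDle p q
    have hsplit : ∑ p : (ι₁ → Bool) × (ι₂ → Bool), ∑ q : (κ₁ → Bool) × (κ₂ → Bool),
        (|dft P (cellOf G p.1) (cellOf H q.1)| * (P (cellOf G' p.2 ∩ cellOf H' q.2)).toReal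
          + (P (cellOf G p.1)).toReal * (P (cellOf H q.1)).toReal
            * |dft P (cellOf G' p.2) (cellOf H' q.2)|)
        = (∑ x, ∑ y, |dft P (cellOf G x) (cellOf H y)|)
            * (∑ x, ∑ y, (P (cellOf G' x ∩ cellOf H' y)).toReal)
          + (∑ x, ∑ y, (P (cellOf G x)).toReal * (P (cellOf H y)).toReal)
            * (∑ x, ∑ y, |dft P (cellOf G' x) (cellOf H' y)|) := by
      rw [← sum_prod_factor (fun x y => |dft P (cellOf G x) (cellOf H y)|)
          (fun x y => (P (cellOf G' x ∩ cellOf H' y)).toReal),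
        ← sum_prod_factor (fun x y => (P (cellOf G x)).toReal * (P (cellOf H y)).toReal)
          (fun x y => |dft P (cellOf G' x) (cellOf H' y)|),
        ← Finset.sum_add_distrib]
      refine Finset.sum_congr rfl fun p _ => ?_
      rw [← Finset.sum_add_distrib]
    rw [hsplit, hsum_e2, hsum_f1, mul_one, one_mul] at hstep
    have h1 : (0:ℝ) ≤ ∑ x : ι₂ → Bool, ∑ y : κ₂ → Bool,
        |dft P (cellOf G' x) (cellOf H' y)| :=
      Finset.sum_nonneg fun x _ => Finset.sum_nonneg fun y _ => abs_nonneg _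
    linarith
  -- main estimate
  have hmain : ∑ k, ∑ l, |dft P (W k) (V l)| ≤ ∑ p, ∑ q, |D p q| := by
    calc ∑ k, ∑ l, |dft P (W k) (V l)|
        ≤ ∑ k, ∑ l, ∑ p, ∑ q, χ k p * ψ l q * |D p q| :=
          Finset.sum_le_sum fun k _ => Finset.sum_le_sum fun l _ => habs k l
      _ = ∑ p, ∑ q, (∑ k, χ k p) * (∑ l, ψ l q) * |D p q| := hswap
      _ ≤ ∑ p, ∑ q, |D p q| := by
          refine Finset.sum_le_sum fun p _ => Finset.sum_le_sum fun q _ => ?_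
          have h := mul_le_mul (mul_le_mul (hsumχ p) (hsumψ q) (hψsum_nonneg q) zero_le_one)
            (le_refl |D p q|) (abs_nonneg _) (by norm_num : (0:ℝ) ≤ 1 * 1)
          simpa using h
  linarith

end CoreAux

section L2Aux
open scoped symmDiff ENNReal

lemma two_factor_bound {Ω : Type*} {m₁ m₂ n₁ n₂ : MeasurableSpace Ω} [𝓕 : MeasurableSpace Ω]
    {P : Measure Ω} [IsProbabilityMeasure P]
    (hm₁ : m₁ ≤ 𝓕) (hm₂ : m₂ ≤ 𝓕) (hn₁ : n₁ ≤ 𝓕) (hn₂ : n₂ ≤ 𝓕)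
    (hInd : Indep (m₁ ⊔ n₁) (m₂ ⊔ n₂) P)
    {a b : ℕ} {A : Fin a → Set Ω} {B : Fin b → Set Ω}
    (hA : IsFinitePartitionIn (m₁ ⊔ m₂) A) (hB : IsFinitePartitionIn (n₁ ⊔ n₂) B) :
    (1/2 : ℝ) * ∑ k, ∑ l, |dft P (A k) (B l)|
      ≤ betaMix P m₁ n₁ + betaMix P m₂ n₂ := by
  classical
  refine le_of_forall_pos_le_add fun ε hε => ?_
  set c : ℝ := (a : ℝ) * b * ((a : ℝ) + b) with hc_def
  have hc0 : 0 ≤ c := by positivity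
  set η : ℝ := ε / (c + 1) with hη_def
  have hη : 0 < η := by positivity
  have hm12 : m₁ ⊔ m₂ ≤ 𝓕 := sup_le hm₁ hm₂
  have hn12 : n₁ ⊔ n₂ ≤ 𝓕 := sup_le hn₁ hn₂
  -- approximate the pieces by saturated sets
  have happroxA : ∀ k, ∃ U ∈ SatClass m₁ m₂, (P (A k ∆ U)).toReal < η := fun k =>
    approx_mem hm12 generateFrom_satClass satClass_pi satClass_empty
      (fun U hU => satClass_compl hU) (fun U hU V hV => satClass_union hU hV)
      (hA.1 k) η hη
  have happroxB : ∀ l, ∃ U ∈ SatClass n₁ n₂, (P (B l ∆ U)).toReal < η := fun l =>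
    approx_mem hn12 generateFrom_satClass satClass_pi satClass_empty
      (fun U hU => satClass_compl hU) (fun U hU V hV => satClass_union hU hV)
      (hB.1 l) η hη
  choose W hWc hWε using happroxA
  choose V hVc hVε using happroxB
  obtain ⟨ι₁, ι₂, hfι₁, hfι₂, G, G', hG, hG', hSatW⟩ := exists_common_families hWc
  obtain ⟨κ₁, κ₂, hfκ₁, hfκ₂, H, H', hH, hH', hSatV⟩ := exists_common_families hVc
  letI := hfι₁; letI := hfι₂; letI := hfκ₁; letI := hfκ₂
  -- disjointify
  have hSatW' : ∀ k, Sat G G' (dsj W k) := fun k =>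
    (hSatW k).diff (Sat.iUnion fun k' => Sat.iUnion fun _ => hSatW k')
  have hSatV' : ∀ l, Sat H H' (dsj V l) := fun l =>
    (hSatV l).diff (Sat.iUnion fun l' => Sat.iUnion fun _ => hSatV l')
  have hWerr : ∀ k, (P (A k ∆ dsj W k)).toReal ≤ (a : ℝ) * η :=
    dsj_err (P := P) hA.2.1 hη.le fun k => (hWε k).le
  have hVerr : ∀ l, (P (B l ∆ dsj V l)).toReal ≤ (b : ℝ) * η :=
    dsj_err (P := P) hB.2.1 hη.le fun l => (hVε l).le
  -- ambient measurability
  have hAm : ∀ k, MeasurableSet (A k) := fun k => hm12 _ (hA.1 k)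
  have hBm : ∀ l, MeasurableSet (B l) := fun l => hn12 _ (hB.1 l)
  have hWm : ∀ k, MeasurableSet (dsj W k) := fun k =>
    hm12 _ ((hSatW' k).measurableSet hG hG')
  have hVm : ∀ l, MeasurableSet (dsj V l) := fun l =>
    hn12 _ ((hSatV' l).measurableSet hH hH')
  -- error propagation + core bound
  have herr := half_dft_sum_err (P := P) hAm hWm hBm hVm hWerr hVerr
  have hcore := core_bound hm₁ hm₂ hn₁ hn₂ hInd hG hG' hH hH'
    (dsj_disjoint W) (dsj_disjoint V) hSatW' hSatV'
  have hcη : (a : ℝ) * b * ((a : ℝ) * η + (b : ℝ) * η) ≤ ε := by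
    have h1 : (a : ℝ) * b * ((a : ℝ) * η + (b : ℝ) * η) = c * η := by
      rw [hc_def]; ring
    rw [h1, hη_def]
    have h2 : c * (ε / (c + 1)) ≤ (c + 1) * (ε / (c + 1)) :=
      mul_le_mul_of_nonneg_right (by linarith) (by positivity)
    have h3 : (c + 1) * (ε / (c + 1)) = ε := by
      field_simp
    linarith
  linarith

end L2Aux

section FinAux
open scoped symmDiff ENNReal

lemma finset_bound {Ω : Type*} {I : Type*} {𝓐 𝓑 : I → MeasurableSpace Ω}
    [𝓕 : MeasurableSpace Ω] {P : Measure Ω} [IsProbabilityMeasure P]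
    (h𝓐 : ∀ i, 𝓐 i ≤ 𝓕) (h𝓑 : ∀ i, 𝓑 i ≤ 𝓕)
    (hind : iIndep (fun i => 𝓐 i ⊔ 𝓑 i) P) (F : Finset I) :
    ∀ {a b : ℕ} {A : Fin a → Set Ω} {B : Fin b → Set Ω},
      IsFinitePartitionIn (⨆ i ∈ F, 𝓐 i) A → IsFinitePartitionIn (⨆ i ∈ F, 𝓑 i) B →
      (1/2 : ℝ) * ∑ k, ∑ l, |dft P (A k) (B l)| ≤ ∑ i ∈ F, betaMix P (𝓐 i) (𝓑 i) := by
  classical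
  induction F using Finset.induction_on with
  | empty =>
    intro a b A B hA hB
    have hbotA : (⨆ i ∈ (∅ : Finset I), 𝓐 i) = ⊥ := by simp
    have hzero : ∀ k l, dft P (A k) (B l) = 0 := by
      intro k l
      have hAk : MeasurableSet[⊥] (A k) := hbotA ▸ hA.1 k
      rcases MeasurableSpace.measurableSet_bot_iff.1 hAk with h | h
      · rw [dft, h]
        simp
      · rw [dft, h]
        simp [Set.univ_inter]
    rw [Finset.sum_congr rfl fun k _ => Finset.sum_congr rfl fun l _ => by
      rw [hzero k l, abs_zero]]
    simp
  | @insert j F hjF ih =>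
    intro a b A B hA hB
    have hsupA : (⨆ i ∈ insert j F, 𝓐 i) = 𝓐 j ⊔ ⨆ i ∈ F, 𝓐 i := by
      rw [Finset.iSup_insert]
    have hsupB : (⨆ i ∈ insert j F, 𝓑 i) = 𝓑 j ⊔ ⨆ i ∈ F, 𝓑 i := by
      rw [Finset.iSup_insert]
    -- independence
    have hdisj : Disjoint ({j} : Set I) (↑F : Set I) := by
      simp [Set.disjoint_singleton_left, hjF]
    have hind0 := indep_iSup_of_disjoint (fun i => sup_le (h𝓐 i) (h𝓑 i)) hind hdisj
    have hsing : (⨆ i ∈ ({j} : Set I), (𝓐 i ⊔ 𝓑 i)) = 𝓐 j ⊔ 𝓑 j := by simp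
    rw [hsing] at hind0
    have hle : (⨆ i ∈ F, 𝓐 i) ⊔ (⨆ i ∈ F, 𝓑 i) ≤ ⨆ i ∈ (↑F : Set I), (𝓐 i ⊔ 𝓑 i) := by
      refine sup_le (iSup₂_le fun i hi => ?_) (iSup₂_le fun i hi => ?_)
      · exact le_trans le_sup_left (le_iSup₂ (f := fun i (_ : i ∈ (↑F : Set I)) => 𝓐 i ⊔ 𝓑 i) i hi)
      · exact le_trans le_sup_right (le_iSup₂ (f := fun i (_ : i ∈ (↑F : Set I)) => 𝓐 i ⊔ 𝓑 i) i hi)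
    have hind1 : Indep (𝓐 j ⊔ 𝓑 j) ((⨆ i ∈ F, 𝓐 i) ⊔ (⨆ i ∈ F, 𝓑 i)) P :=
      indep_of_indep_of_le_right hind0 hle
    -- apply the two-factor bound
    have hA' : IsFinitePartitionIn (𝓐 j ⊔ ⨆ i ∈ F, 𝓐 i) A := hsupA ▸ hA
    have hB' : IsFinitePartitionIn (𝓑 j ⊔ ⨆ i ∈ F, 𝓑 i) B := hsupB ▸ hB
    have h2f := two_factor_bound (h𝓐 j) (iSup₂_le fun i _ => h𝓐 i) (h𝓑 j)
      (iSup₂_le fun i _ => h𝓑 i) hind1 hA' hB'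
    have hrec : betaMix P (⨆ i ∈ F, 𝓐 i) (⨆ i ∈ F, 𝓑 i)
        ≤ ∑ i ∈ F, betaMix P (𝓐 i) (𝓑 i) := by
      refine betaMix_le fun x hx => ?_
      obtain ⟨m, n, A', B', hA'', hB'', rfl⟩ := hx
      exact ih hA'' hB''
    rw [Finset.sum_insert hjF]
    linarith
end FinAux

section SnocAux
open scoped symmDiff ENNReal

lemma sum_snoc_le {a b : ℕ} (g : Fin (a+1) → Fin (b+1) → ℝ) (hg : ∀ k l, 0 ≤ g k l) :
    ∑ k : Fin a, ∑ l : Fin b, g k.castSucc l.castSucc ≤ ∑ k, ∑ l, g k l := by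
  have hinner : ∀ k : Fin (a+1), ∑ l : Fin b, g k l.castSucc ≤ ∑ l, g k l := by
    intro k
    rw [Fin.sum_univ_castSucc (f := g k)]
    exact le_add_of_nonneg_right (hg k _)
  calc ∑ k : Fin a, ∑ l : Fin b, g k.castSucc l.castSucc
      ≤ ∑ k : Fin a, ∑ l : Fin (b+1), g k.castSucc l :=
        Finset.sum_le_sum fun k _ => hinner _
    _ ≤ ∑ k : Fin (a+1), ∑ l : Fin (b+1), g k l := by
        rw [Fin.sum_univ_castSucc (f := fun k => ∑ l, g k l)]
        exact le_add_of_nonneg_right (Finset.sum_nonneg fun l _ => hg _ _)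

/-- Completing a disjoint family to a partition by adding the complement of the union. -/
lemma snoc_partition {Ω : Type*} {m : MeasurableSpace Ω} {a : ℕ} {W : Fin a → Set Ω}
    (hm : ∀ k, MeasurableSet[m] (W k)) (hd : Pairwise (Function.onFun Disjoint W)) :
    IsFinitePartitionIn m (Fin.snoc W ((⋃ k, W k)ᶜ) : Fin (a+1) → Set Ω) := by
  refine ⟨?_, ?_, ?_⟩
  · intro k
    refine Fin.lastCases ?_ ?_ k
    · rw [Fin.snoc_last]
      exact (MeasurableSet.iUnion fun k' => hm k').compl
    · intro i
      rw [Fin.snoc_castSucc]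
      exact hm i
  · have hWc : ∀ k : Fin a, Disjoint (W k) ((⋃ k'', W k'')ᶜ) :=
      fun k => disjoint_compl_right.mono_left (subset_iUnion W k)
    intro k k' hne
    rcases Fin.eq_castSucc_or_eq_last k with ⟨i, rfl⟩ | rfl
    · rcases Fin.eq_castSucc_or_eq_last k' with ⟨i', rfl⟩ | rfl
      · have hii : i ≠ i' := fun h => hne (by rw [h])
        have := hd hii
        rw [Function.onFun, Fin.snoc_castSucc, Fin.snoc_castSucc]
        exact this
      · rw [Function.onFun, Fin.snoc_castSucc, Fin.snoc_last]
        exact hWc i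
    · rcases Fin.eq_castSucc_or_eq_last k' with ⟨i', rfl⟩ | rfl
      · rw [Function.onFun, Fin.snoc_last, Fin.snoc_castSucc]
        exact (hWc i').symm
      · exact absurd rfl hne
  · ext ω
    simp only [mem_iUnion, mem_univ, iff_true]
    by_cases h : ω ∈ ⋃ k, W k
    · obtain ⟨k, hk⟩ := mem_iUnion.1 h
      exact ⟨k.castSucc, by rwa [Fin.snoc_castSucc]⟩
    · exact ⟨Fin.last a, by rwa [Fin.snoc_last]⟩
end SnocAux

section FinSupAux
open scoped symmDiff ENNReal

/-- The algebra of sets measurable w.r.t. the join over some finite subset. -/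
def finSupClass {Ω I : Type*} (m : I → MeasurableSpace Ω) : Set (Set Ω) :=
  {U | ∃ F : Finset I, MeasurableSet[⨆ i ∈ F, m i] U}

variable {Ω I : Type*} {m : I → MeasurableSpace Ω}

lemma finSupClass_empty : (∅ : Set Ω) ∈ finSupClass m :=
  ⟨∅, @MeasurableSet.empty Ω (⨆ i ∈ (∅ : Finset I), m i)⟩

lemma finSupClass_compl {U : Set Ω} (h : U ∈ finSupClass m) : Uᶜ ∈ finSupClass m := by
  obtain ⟨F, hU⟩ := h
  exact ⟨F, hU.compl⟩

lemma finSupClass_mono {F F' : Finset I} (h : F ⊆ F') {U : Set Ω}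
    (hU : MeasurableSet[⨆ i ∈ F, m i] U) : MeasurableSet[⨆ i ∈ F', m i] U := by
  have hle : (⨆ i ∈ F, m i) ≤ ⨆ i ∈ F', m i := biSup_mono fun i hi => h hi
  exact hle U hU

lemma finSupClass_union {U V : Set Ω} (hU : U ∈ finSupClass m) (hV : V ∈ finSupClass m) :
    U ∪ V ∈ finSupClass m := by
  classical
  obtain ⟨F, hU⟩ := hU
  obtain ⟨F', hV⟩ := hV
  exact ⟨F ∪ F', (finSupClass_mono Finset.subset_union_left hU).union
    (finSupClass_mono Finset.subset_union_right hV)⟩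

lemma finSupClass_inter {U V : Set Ω} (hU : U ∈ finSupClass m) (hV : V ∈ finSupClass m) :
    U ∩ V ∈ finSupClass m := by
  classical
  obtain ⟨F, hU⟩ := hU
  obtain ⟨F', hV⟩ := hV
  exact ⟨F ∪ F', (finSupClass_mono Finset.subset_union_left hU).inter
    (finSupClass_mono Finset.subset_union_right hV)⟩

lemma finSupClass_pi : IsPiSystem (finSupClass m) := fun U hU V hV _ =>
  finSupClass_inter hU hV

lemma generateFrom_finSupClass :
    (⨆ i, m i) = MeasurableSpace.generateFrom (finSupClass m) := by
  refine le_antisymm (iSup_le fun i => ?_) (MeasurableSpace.generateFrom_le fun U hU => ?_)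
  · intro S hS
    refine MeasurableSpace.measurableSet_generateFrom ⟨{i}, ?_⟩
    have hsing : (⨆ i' ∈ ({i} : Finset I), m i') = m i := by simp
    rw [hsing]
    exact hS
  · obtain ⟨F, hU⟩ := hU
    exact (iSup₂_le fun i _ => le_iSup m i : (⨆ i ∈ F, m i) ≤ ⨆ i, m i) U hU

end FinSupAux

open scoped symmDiff ENNReal in
theorem statement_9 {Ω : Type*} [MeasurableSpace Ω] (P : Measure Ω)
    [IsProbabilityMeasure P] {I : Type*} [Countable I] [Nonempty I]
    (𝓐 𝓑 : I → MeasurableSpace Ω)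
    (h𝓐 : ∀ i, 𝓐 i ≤ ‹MeasurableSpace Ω›) (h𝓑 : ∀ i, 𝓑 i ≤ ‹MeasurableSpace Ω›)
    (hind : iIndep (fun i => 𝓐 i ⊔ 𝓑 i) P) :
    ENNReal.ofReal (betaMix P (⨆ i, 𝓐 i) (⨆ i, 𝓑 i))
      ≤ ∑' i, ENNReal.ofReal (betaMix P (𝓐 i) (𝓑 i)) := by
  classical
  have hMA : (⨆ i, 𝓐 i) ≤ ‹MeasurableSpace Ω› := iSup_le h𝓐
  have hMB : (⨆ i, 𝓑 i) ≤ ‹MeasurableSpace Ω› := iSup_le h𝓑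
  -- Step 3: finite reduction
  have step3 : ∀ x ∈ betaSet P (⨆ i, 𝓐 i) (⨆ i, 𝓑 i), ∀ δ : ℝ, 0 < δ →
      ∃ F : Finset I, x ≤ ∑ i ∈ F, betaMix P (𝓐 i) (𝓑 i) + δ := by
    rintro x ⟨a, b, A, B, hA, hB, rfl⟩ δ hδ
    set c : ℝ := (a : ℝ) * b * ((a : ℝ) + b) with hc_def
    have hc0 : 0 ≤ c := by positivity
    set η : ℝ := δ / (c + 1) with hη_def
    have hη : 0 < η := by positivity
    -- approximate the pieces
    have happA : ∀ k, ∃ U ∈ finSupClass 𝓐, (P (A k ∆ U)).toReal < η := fun k =>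
      approx_mem hMA generateFrom_finSupClass finSupClass_pi finSupClass_empty
        (fun U hU => finSupClass_compl hU) (fun U hU V hV => finSupClass_union hU hV)
        (hA.1 k) η hη
    have happB : ∀ l, ∃ U ∈ finSupClass 𝓑, (P (B l ∆ U)).toReal < η := fun l =>
      approx_mem hMB generateFrom_finSupClass finSupClass_pi finSupClass_empty
        (fun U hU => finSupClass_compl hU) (fun U hU V hV => finSupClass_union hU hV)
        (hB.1 l) η hη
    choose W hWc hWε using happA
    choose V hVc hVε using happB
    choose FA hFA using hWc
    choose FB hFB using hVc
    set F : Finset I := (Finset.univ.biUnion FA) ∪ (Finset.univ.biUnion FB) with hF_def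
    refine ⟨F, ?_⟩
    have hWF : ∀ k, MeasurableSet[⨆ i ∈ F, 𝓐 i] (W k) := fun k =>
      finSupClass_mono ((Finset.subset_biUnion_of_mem FA (Finset.mem_univ k)).trans
        Finset.subset_union_left) (hFA k)
    have hVF : ∀ l, MeasurableSet[⨆ i ∈ F, 𝓑 i] (V l) := fun l =>
      finSupClass_mono ((Finset.subset_biUnion_of_mem FB (Finset.mem_univ l)).trans
        Finset.subset_union_right) (hFB l)
    have hWF' : ∀ k, MeasurableSet[⨆ i ∈ F, 𝓐 i] (dsj W k) := fun k =>
      (hWF k).diff (MeasurableSet.iUnion fun k' => MeasurableSet.iUnion fun _ => hWF k')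
    have hVF' : ∀ l, MeasurableSet[⨆ i ∈ F, 𝓑 i] (dsj V l) := fun l =>
      (hVF l).diff (MeasurableSet.iUnion fun l' => MeasurableSet.iUnion fun _ => hVF l')
    have hFA𝓕 : (⨆ i ∈ F, 𝓐 i) ≤ ‹MeasurableSpace Ω› := iSup₂_le fun i _ => h𝓐 i
    have hFB𝓕 : (⨆ i ∈ F, 𝓑 i) ≤ ‹MeasurableSpace Ω› := iSup₂_le fun i _ => h𝓑 i
    -- errors
    have hWerr : ∀ k, (P (A k ∆ dsj W k)).toReal ≤ (a : ℝ) * η :=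
      dsj_err (P := P) hA.2.1 hη.le fun k => (hWε k).le
    have hVerr : ∀ l, (P (B l ∆ dsj V l)).toReal ≤ (b : ℝ) * η :=
      dsj_err (P := P) hB.2.1 hη.le fun l => (hVε l).le
    have herr := half_dft_sum_err (P := P) (fun k => hMA _ (hA.1 k))
      (fun k => hFA𝓕 _ (hWF' k)) (fun l => hMB _ (hB.1 l)) (fun l => hFB𝓕 _ (hVF' l))
      hWerr hVerr
    -- complete to partitions
    set WW : Fin (a+1) → Set Ω := Fin.snoc (dsj W) ((⋃ k, dsj W k)ᶜ) with hWW_def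
    set VV : Fin (b+1) → Set Ω := Fin.snoc (dsj V) ((⋃ l, dsj V l)ᶜ) with hVV_def
    have hWWpart : IsFinitePartitionIn (⨆ i ∈ F, 𝓐 i) WW :=
      snoc_partition hWF' (dsj_disjoint W)
    have hVVpart : IsFinitePartitionIn (⨆ i ∈ F, 𝓑 i) VV :=
      snoc_partition hVF' (dsj_disjoint V)
    have hfin := finset_bound h𝓐 h𝓑 hind F hWWpart hVVpart
    have hext : ∑ k : Fin a, ∑ l : Fin b, |dft P (dsj W k) (dsj V l)|
        ≤ ∑ k : Fin (a+1), ∑ l : Fin (b+1), |dft P (WW k) (VV l)| := by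
      have h := sum_snoc_le (fun k l => |dft P (WW k) (VV l)|) (fun k l => abs_nonneg _)
      refine le_trans (le_of_eq ?_) h
      refine Finset.sum_congr rfl fun k _ => Finset.sum_congr rfl fun l _ => ?_
      simp only [hWW_def, hVV_def, Fin.snoc_castSucc]
    have hcη : (a : ℝ) * b * ((a : ℝ) * η + (b : ℝ) * η) ≤ δ := by
      have h1 : (a : ℝ) * b * ((a : ℝ) * η + (b : ℝ) * η) = c * η := by
        rw [hc_def]; ring
      rw [h1, hη_def]
      have h2 : c * (δ / (c + 1)) ≤ (c + 1) * (δ / (c + 1)) :=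
        mul_le_mul_of_nonneg_right (by linarith) (by positivity)
      have h3 : (c + 1) * (δ / (c + 1)) = δ := by field_simp
      linarith
    have hgoal : (1/2 : ℝ) * ∑ k, ∑ l, |dft P (A k) (B l)|
        ≤ ∑ i ∈ F, betaMix P (𝓐 i) (𝓑 i) + δ := by linarith
    exact hgoal
  -- Final assembly in ℝ≥0∞
  refine ENNReal.le_of_forall_pos_le_add fun ε hε hlt => ?_
  have hhalf : (0 : ℝ) < (ε : ℝ) / 2 := by
    have : (0 : ℝ) < (ε : ℝ) := by exact_mod_cast hε
    linarith
  set T : ℝ≥0∞ := ∑' i, ENNReal.ofReal (betaMix P (𝓐 i) (𝓑 i)) with hT_def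
  have hkey : ∀ x ∈ betaSet P (⨆ i, 𝓐 i) (⨆ i, 𝓑 i),
      ENNReal.ofReal x ≤ T + ENNReal.ofReal ((ε : ℝ) / 2) := by
    intro x hx
    obtain ⟨F, hF⟩ := step3 x hx ((ε : ℝ) / 2) hhalf
    calc ENNReal.ofReal x
        ≤ ENNReal.ofReal (∑ i ∈ F, betaMix P (𝓐 i) (𝓑 i) + (ε : ℝ) / 2) :=
          ENNReal.ofReal_le_ofReal hF
      _ ≤ ENNReal.ofReal (∑ i ∈ F, betaMix P (𝓐 i) (𝓑 i))
            + ENNReal.ofReal ((ε : ℝ) / 2) := ENNReal.ofReal_add_le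
      _ ≤ T + ENNReal.ofReal ((ε : ℝ) / 2) := by
          refine add_le_add_left ?_ _
          rw [ENNReal.ofReal_sum_of_nonneg fun i _ => betaMix_nonneg (h𝓐 i) (h𝓑 i)]
          exact ENNReal.sum_le_tsum F
  have hT'top : T + ENNReal.ofReal ((ε : ℝ) / 2) ≠ ⊤ :=
    ENNReal.add_ne_top.2 ⟨hlt.ne, ENNReal.ofReal_ne_top⟩
  have hle : betaMix P (⨆ i, 𝓐 i) (⨆ i, 𝓑 i)
      ≤ (T + ENNReal.ofReal ((ε : ℝ) / 2)).toReal := by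
    refine Real.sSup_le (fun x hx => ?_) ENNReal.toReal_nonneg
    have h := hkey x hx
    by_cases hx0 : x ≤ 0
    · exact le_trans hx0 ENNReal.toReal_nonneg
    · push_neg at hx0
      have h2 := ENNReal.toReal_mono hT'top h
      rwa [ENNReal.toReal_ofReal hx0.le] at h2
  calc ENNReal.ofReal (betaMix P (⨆ i, 𝓐 i) (⨆ i, 𝓑 i))
      ≤ ENNReal.ofReal (T + ENNReal.ofReal ((ε : ℝ) / 2)).toReal :=
        ENNReal.ofReal_le_ofReal hle
    _ = T + ENNReal.ofReal ((ε : ℝ) / 2) := ENNReal.ofReal_toReal hT'top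
    _ ≤ T + ε := by
        refine add_le_add_right ?_ T
        calc ENNReal.ofReal ((ε : ℝ) / 2) ≤ ENNReal.ofReal (ε : ℝ) :=
              ENNReal.ofReal_le_ofReal (by linarith)
          _ = (ε : ℝ≥0∞) := ENNReal.ofReal_coe_nnreal


end Bradley
end
end

section
/- Let g : [0,∞) → ℝ be continuous, convex, strictly decreasing, with g(x) ≤ −1 for all x, and suppose there is a real number L ≤ 0 such that L·x − g(x) → ∞ as x → ∞ and, for every real t < L, g(x) − t·x → ∞ as x → ∞. Then for every v ∈ [0,∞) there exists w ∈ (v,∞) such that M_{v,w} = 1. -/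
open MeasureTheory ProbabilityTheory Filter Set

noncomputable section

namespace Bradley

variable {Ω : Type*} [MeasurableSpace Ω]

open Topology in
theorem statement_12 (g : ℝ → ℝ)
    (hcont : ContinuousOn g (Set.Ici 0)) (hconv : ConvexOn ℝ (Set.Ici 0) g)
    (hanti : StrictAntiOn g (Set.Ici 0)) (hneg : ∀ x ∈ Set.Ici (0 : ℝ), g x ≤ -1)
    (L : ℝ) (hL : L ≤ 0)
    (h1 : Tendsto (fun x => L * x - g x) atTop atTop)
    (h2 : ∀ t : ℝ, t < L → Tendsto (fun x => g x - t * x) atTop atTop) :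
    ∀ v ∈ Set.Ici (0 : ℝ), ∃ w ∈ Set.Ioi v, Mvy g v w = 1 := by
  intro v hv
  have memIci : ∀ {w : ℝ}, v ≤ w → w ∈ Set.Ici (0:ℝ) := fun {w} hw => le_trans hv hw
  have hantiOn : AntitoneOn g (Set.Ici 0) := hanti.antitoneOn
  -- chord slope is monotone in the right endpoint
  have slope_mono : ∀ {a b : ℝ}, v < a → a ≤ b → chordSlope g v a ≤ chordSlope g v b := by
    intro a b ha hab
    have hb : v < b := lt_of_lt_of_le ha hab
    simpa [chordSlope] using
      hconv.secant_mono hv (memIci ha.le) (memIci hb.le) ha.ne' hb.ne' hab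
  -- chord slope is negative
  have slope_neg : ∀ {w : ℝ}, v < w → chordSlope g v w < 0 := by
    intro w hw
    have : g w < g v := hanti hv (memIci hw.le) hw
    exact div_neg_of_neg_of_pos (by linarith) (by linarith)
  have slope_mul : ∀ {a : ℝ}, v < a → chordSlope g v a * (a - v) = g a - g v := by
    intro a ha
    exact div_mul_cancel₀ _ (sub_ne_zero.2 ha.ne')
  -- basic sSup facts
  have himgne : ∀ {w : ℝ}, v < w →
      ((fun x => chordLine g v w x - g x) '' Set.Icc v w).Nonempty := by
    intro w hw
    exact ⟨_, Set.mem_image_of_mem _ (Set.left_mem_Icc.2 hw.le)⟩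
  have hbdd : ∀ {w : ℝ}, v < w →
      BddAbove ((fun x => chordLine g v w x - g x) '' Set.Icc v w) := by
    intro w hw
    apply (isCompact_Icc.image_of_continuousOn ?_).bddAbove
    simp only [chordLine]
    exact (continuousOn_const.add (continuousOn_const.mul
      (continuousOn_id.sub continuousOn_const))).sub
      (hcont.mono (fun x hx => memIci hx.1))
  have M_ge : ∀ {w x : ℝ}, v < w → x ∈ Set.Icc v w →
      chordLine g v w x - g x ≤ Mvy g v w := by
    intro w x hw hx
    exact le_csSup (hbdd hw) (Set.mem_image_of_mem _ hx)
  have M_le : ∀ {w b : ℝ}, v < w → (∀ x ∈ Set.Icc v w, chordLine g v w x - g x ≤ b) →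
      Mvy g v w ≤ b := by
    intro w b hw h
    refine csSup_le (himgne hw) ?_
    rintro _ ⟨x, hx, rfl⟩
    exact h x hx
  have M_nonneg : ∀ {w : ℝ}, v < w → 0 ≤ Mvy g v w := by
    intro w hw
    have h := M_ge hw (Set.left_mem_Icc.2 hw.le)
    simp only [chordLine, sub_self, mul_zero, add_zero] at h
    linarith
  -- monotonicity of M
  have M_mono : ∀ {a b : ℝ}, v < a → a ≤ b → Mvy g v a ≤ Mvy g v b := by
    intro a b ha hab
    have hb : v < b := lt_of_lt_of_le ha hab
    refine M_le ha ?_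
    intro x hx
    have h1 : chordSlope g v a * (x - v) ≤ chordSlope g v b * (x - v) :=
      mul_le_mul_of_nonneg_right (slope_mono ha hab) (by linarith [hx.1])
    have h2 := M_ge hb (Set.mem_Icc.2 ⟨hx.1, le_trans hx.2 hab⟩)
    simp only [chordLine] at h2 ⊢
    linarith
  -- modulus of continuity for M
  have M_modulus : ∀ {a b : ℝ}, v < a → a ≤ b →
      Mvy g v b ≤ Mvy g v a +
        (chordSlope g v b - chordSlope g v a) * (a - v) + (g a - g b) := by
    intro a b ha hab
    have hb : v < b := lt_of_lt_of_le ha hab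
    have hslope := slope_mono ha hab
    have hgab : g b ≤ g a := hantiOn (memIci ha.le) (memIci hb.le) hab
    refine M_le hb ?_
    intro x hx
    have e2 := sub_mul (chordSlope g v b) (chordSlope g v a) (a - v)
    rcases le_or_gt x a with hxa | hax
    · have hMa := M_ge ha (Set.mem_Icc.2 ⟨hx.1, hxa⟩)
      have h1 : (chordSlope g v b - chordSlope g v a) * (x - v)
          ≤ (chordSlope g v b - chordSlope g v a) * (a - v) :=
        mul_le_mul_of_nonneg_left (by linarith) (by linarith)
      have e1 := sub_mul (chordSlope g v b) (chordSlope g v a) (x - v)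
      simp only [chordLine] at hMa ⊢
      linarith
    · have hMa := M_nonneg ha
      have hgx : g b ≤ g x := hantiOn (memIci (le_trans ha.le hax.le)) (memIci hb.le) hx.2
      have h1 : chordSlope g v b * (x - v) ≤ chordSlope g v b * (a - v) :=
        mul_le_mul_of_nonpos_left (by linarith : a - v ≤ x - v) (slope_neg hb).le
      have h2 := slope_mul ha
      simp only [chordLine]
      linarith
  -- M is small near v
  have M_small : ∀ {w : ℝ}, v < w → Mvy g v w ≤ g v - g w := by
    intro w hw
    refine M_le hw ?_
    intro x hx
    have h1 : chordSlope g v w * (x - v) ≤ 0 :=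
      mul_nonpos_of_nonpos_of_nonneg (slope_neg hw).le (by linarith [hx.1])
    have h2 : g w ≤ g x := hantiOn (memIci hx.1) (memIci hw.le) hx.2
    simp only [chordLine]
    linarith
  -- find w₂ with Mvy g v w₂ ≥ 2
  obtain ⟨x₀, hx₀g, hx₀ge⟩ :=
    ((h1.eventually_ge_atTop (3 + (L * v - g v))).and (eventually_ge_atTop (v + 1))).exists
  have hx₀v : v < x₀ := by linarith
  have hx0pos : (0:ℝ) < x₀ - v := by linarith
  obtain ⟨t, ht, htx⟩ : ∃ t : ℝ, t < L ∧ t * (x₀ - v) = L * (x₀ - v) - 1/2 := by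
    refine ⟨L - 1 / (2 * (x₀ - v)), ?_, ?_⟩
    · have hpos : 0 < 1 / (2 * (x₀ - v)) := by positivity
      linarith
    · field_simp
  obtain ⟨w₂, hw₂t, hw₂ge⟩ :=
    (((h2 t ht).eventually_ge_atTop (g v - t * v)).and (eventually_ge_atTop (x₀ + 1))).exists
  have hvw₂ : v < w₂ := by linarith
  have hslopet : t ≤ chordSlope g v w₂ := by
    rw [chordSlope, le_div_iff₀ (by linarith : (0:ℝ) < w₂ - v)]
    have := mul_sub t w₂ v
    linarith
  have hM2 : 2 ≤ Mvy g v w₂ := by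
    have hx₀mem : x₀ ∈ Set.Icc v w₂ := ⟨hx₀v.le, by linarith⟩
    have h := M_ge hvw₂ hx₀mem
    have hts : t * (x₀ - v) ≤ chordSlope g v w₂ * (x₀ - v) :=
      mul_le_mul_of_nonneg_right hslopet (by linarith)
    have hLx := mul_sub L x₀ v
    simp only [chordLine] at h
    linarith
  -- find w₁ ∈ (v, w₂) with g v - g w₁ < 1
  have hgt : Tendsto g (𝓝[Set.Ioi v] v) (𝓝 (g v)) :=
    (hcont v hv).mono (fun x hx => memIci (le_of_lt hx))
  have hev1 : ∀ᶠ w in 𝓝[Set.Ioi v] v, g v - 1 < g w :=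
    (tendsto_order.1 hgt).1 (g v - 1) (by linarith)
  have hev2 : ∀ᶠ w in 𝓝[Set.Ioi v] v, w < w₂ :=
    mem_nhdsWithin_of_mem_nhds (Iio_mem_nhds hvw₂)
  have hev3 : ∀ᶠ w in 𝓝[Set.Ioi v] v, w ∈ Set.Ioi v := eventually_mem_nhdsWithin
  obtain ⟨w₁, hw₁g, hw₁lt, hw₁v⟩ := (hev1.and (hev2.and hev3)).exists
  have hvw₁ : v < w₁ := hw₁v
  have hM1 : Mvy g v w₁ < 1 := lt_of_le_of_lt (M_small hvw₁) (by linarith)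
  -- continuity of M on [w₁, w₂]
  have hIccsub : ∀ {x : ℝ}, x ∈ Set.Icc w₁ w₂ → v < x := fun {x} hx =>
    lt_of_lt_of_le hvw₁ hx.1
  have hMcont : ContinuousOn (fun w => Mvy g v w) (Set.Icc w₁ w₂) := by
    intro w hw
    have hvw : v < w := hIccsub hw
    set B : ℝ → ℝ := fun w' =>
      |chordSlope g v w' - chordSlope g v w| * (w₂ - v) + |g w - g w'| with hBdef
    have hbound : ∀ w' ∈ Set.Icc w₁ w₂, |Mvy g v w' - Mvy g v w| ≤ B w' := by
      intro w' hw'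
      have hvw' : v < w' := hIccsub hw'
      rcases le_total w w' with h | h
      · have hm := M_mono hvw h
        have hmod := M_modulus hvw h
        have hb1 : (chordSlope g v w' - chordSlope g v w) * (w - v)
            ≤ |chordSlope g v w' - chordSlope g v w| * (w₂ - v) :=
          mul_le_mul (le_abs_self _) (by linarith [hw.2]) (by linarith) (abs_nonneg _)
        have hb2 : g w - g w' ≤ |g w - g w'| := le_abs_self _
        rw [abs_of_nonneg (by linarith : (0:ℝ) ≤ Mvy g v w' - Mvy g v w)]
        simp only [hBdef]
        linarith
      · have hm := M_mono hvw' h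
        have hmod := M_modulus hvw' h
        have hb1 : (chordSlope g v w - chordSlope g v w') * (w' - v)
            ≤ |chordSlope g v w' - chordSlope g v w| * (w₂ - v) := by
          rw [abs_sub_comm]
          exact mul_le_mul (le_abs_self _) (by linarith [hw'.2]) (by linarith) (abs_nonneg _)
        have hb2 : g w' - g w ≤ |g w - g w'| := by
          rw [abs_sub_comm]; exact le_abs_self _
        rw [abs_of_nonpos (by linarith : Mvy g v w' - Mvy g v w ≤ 0)]
        simp only [hBdef]
        linarith
    have hgw : ContinuousWithinAt g (Set.Icc w₁ w₂) w :=
      (hcont w (memIci hvw.le)).mono (fun x hx => memIci (hIccsub hx).le)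
    have hζ : ContinuousWithinAt (fun w' => chordSlope g v w') (Set.Icc w₁ w₂) w := by
      simp only [chordSlope]
      exact (hgw.sub continuousWithinAt_const).div
        (continuousWithinAt_id.sub continuousWithinAt_const) (sub_ne_zero.2 hvw.ne')
    have hBc : ContinuousWithinAt B (Set.Icc w₁ w₂) w :=
      (((hζ.sub continuousWithinAt_const).abs).mul continuousWithinAt_const).add
        ((continuousWithinAt_const.sub hgw).abs)
    have hBtend : Tendsto B (𝓝[Set.Icc w₁ w₂] w) (𝓝 0) := by
      have hB0 : B w = 0 := by simp [hBdef]
      rw [← hB0]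
      exact hBc
    have h0 : Tendsto (fun w' => |Mvy g v w' - Mvy g v w|)
        (𝓝[Set.Icc w₁ w₂] w) (𝓝 0) :=
      squeeze_zero' (eventually_nhdsWithin_of_forall (fun w' _ => abs_nonneg _))
        (eventually_nhdsWithin_of_forall hbound) hBtend
    have : Tendsto (fun w' => Mvy g v w') (𝓝[Set.Icc w₁ w₂] w) (𝓝 (Mvy g v w)) := by
      rw [tendsto_iff_dist_tendsto_zero]
      simpa [Real.dist_eq] using h0
    exact this
  -- intermediate value theorem
  have hw₁₂ : w₁ ≤ w₂ := hw₁lt.le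
  have h1mem : (1:ℝ) ∈ Set.Icc (Mvy g v w₁) (Mvy g v w₂) := ⟨hM1.le, by linarith⟩
  obtain ⟨w, hwmem, hMw⟩ := intermediate_value_Icc hw₁₂ hMcont h1mem
  exact ⟨w, lt_of_lt_of_le hvw₁ hwmem.1, hMw⟩


end Bradley
end
end
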